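/- arXiv:2007.10911 — 10 statements merged into one kernel-verified Lean document; each statement's English description precedes it below -/
import Mathlib

section
/- Let d ≥ 1, γ ∈ (0,1), x⁰ ∈ ℝ^d, and let ψ : ℝ^d × ℝ → ℝ^d and φ : ℝ^d × ℝ → ℝ be bounded, locally Lipschitz continuous functions with φ(x,0) > 0 for every x ∈ ℝ^d. Then there exists a unique pair of continuous functions X : [0,∞) → ℝ^d and Y : [0,∞) → ℝ such that Y(t) > 0 for all t > 0, X(0) = x⁰, Y(0) = 0, and for all t ≥ 0: X(t) = x⁰ + ∫₀ᵗ ψ(X(s),Y(s)) ds and Y(t) = ∫₀ᵗ φ(X(s),Y(s)) Y(s)^γ ds. -/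
/-!
Substituting `Z = Y ^ (1 - γ)` removes the singularity at `y = 0`: with `p = (1 - γ)⁻¹ ≥ 1`,
`(X, Z)` solves `X' = ψ (X, Z ^ p)`, `Z' = (1 - γ) φ (X, Z ^ p)`, whose right-hand side is bounded
and locally Lipschitz, so Picard–Lindelöf and Grönwall give a unique global solution from
`(x⁰, 0)`. Since `Z' > 0` wherever `Z = 0`, `Z` is positive for `t > 0`, and `Y = Z ^ p` solves the
original system. Conversely, for a solution with `Y > 0` on `(0, ∞)` the chain rule applies to
`Y ^ (1 - γ)` away from `t = 0`, so `(X, Y ^ (1 - γ))` solves the regular system and is therefore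
the solution constructed above.
-/

open MeasureTheory Set Filter Topology

section Calculus

section Prod

variable {𝕜 F G : Type*} [NontriviallyNormedField 𝕜] [NormedAddCommGroup F] [NormedSpace 𝕜 F]
  [NormedAddCommGroup G] [NormedSpace 𝕜 G] {f : 𝕜 → F × G} {f' : F × G} {s : Set 𝕜} {x : 𝕜}

theorem HasDerivWithinAt.snd (h : HasDerivWithinAt f f' s x) :
    HasDerivWithinAt (fun y => (f y).2) f'.2 s x :=
  (ContinuousLinearMap.snd 𝕜 F G).hasFDerivAt.comp_hasDerivWithinAt x h

theorem HasDerivAt.fst (h : HasDerivAt f f' x) : HasDerivAt (fun y => (f y).1) f'.1 x :=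
  (ContinuousLinearMap.fst 𝕜 F G).hasFDerivAt.comp_hasDerivAt x h

theorem HasDerivAt.snd (h : HasDerivAt f f' x) : HasDerivAt (fun y => (f y).2) f'.2 x :=
  (ContinuousLinearMap.snd 𝕜 F G).hasFDerivAt.comp_hasDerivAt x h

end Prod

theorem pos_of_deriv_pos_at_zeros {f f' : ℝ → ℝ} {a : ℝ}
    (hf : ∀ t ∈ Ici a, HasDerivWithinAt f (f' t) (Ici a) t) (ha : 0 ≤ f a)
    (hpos : ∀ t ∈ Ici a, f t = 0 → 0 < f' t) {t : ℝ} (ht : a < t) : 0 < f t := by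
  have hcont : ContinuousOn f (Ici a) := fun s hs => (hf s hs).continuousWithinAt
  have hnonneg : ∀ s ∈ Ici a, 0 ≤ f s := fun s hs =>
    image_le_of_deriv_right_lt_deriv_boundary' (f := fun _ => 0) (f' := fun _ => 0)
      continuousOn_const (fun _ _ => hasDerivWithinAt_const _ _ _) ha
      (hcont.mono Icc_subset_Ici_self)
      (fun u hu => (hf u hu.1).mono (Ici_subset_Ici.2 hu.1))
      (fun u hu hu0 => hpos u hu.1 hu0.symm) ⟨hs, le_rfl⟩
  refine (hnonneg t ht.le).lt_of_ne fun hft => (hpos t ht.le hft.symm).ne' ?_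
  have hmin : IsLocalMin f t := by
    filter_upwards [Ici_mem_nhds ht] with s hs
    rw [← hft]
    exact hnonneg s hs
  exact hmin.hasDerivAt_eq_zero ((hf t ht.le).hasDerivAt (Ici_mem_nhds ht))

variable {E : Type*} [NormedAddCommGroup E] [NormedSpace ℝ E]

theorem hasDerivWithinAt_Ici_of_hasDerivAt {f k : ℝ → E} {a : ℝ} (hf : ContinuousOn f (Ici a))
    (hderiv : ∀ t > a, HasDerivAt f (k t) t) (hk : ContinuousOn k (Ici a)) :
    ∀ t ∈ Ici a, HasDerivWithinAt f (k t) (Ici a) t := by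
  intro t ht
  rcases (mem_Ici.1 ht).eq_or_lt with rfl | ht
  · refine hasDerivWithinAt_Ici_of_tendsto_deriv (s := Ioi a)
      (fun s hs => (hderiv s hs).differentiableAt.differentiableWithinAt)
      ((hf a ht).mono Ioi_subset_Ici_self) self_mem_nhdsWithin ?_
    refine ((hk a ht).mono Ioi_subset_Ici_self).tendsto.congr' ?_
    filter_upwards [self_mem_nhdsWithin] with s hs using (hderiv s hs).deriv.symm
  · exact (hderiv t ht).hasDerivWithinAt

variable [CompleteSpace E]

theorem hasDerivAt_of_forall_eq_add_integral {f k : ℝ → E} {c : E} {a : ℝ}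
    (hf : ∀ t ≥ a, f t = c + ∫ s in a..t, k s) (hk : ContinuousOn k (Ici a)) {t : ℝ}
    (ht : a < t) : HasDerivAt f (k t) t := by
  have hint : IntervalIntegrable k volume a t :=
    (hk.mono (by rw [uIcc_of_le ht.le]; exact Icc_subset_Ici_self)).intervalIntegrable
  refine ((intervalIntegral.integral_hasDerivAt_right hint
    ((hk.mono Ioi_subset_Ici_self).stronglyMeasurableAtFilter isOpen_Ioi t ht)
    (hk.continuousAt (Ici_mem_nhds ht))).const_add c).congr_of_eventuallyEq ?_
  filter_upwards [Ici_mem_nhds ht] with s hs using hf s hs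

theorem eq_add_integral_of_hasDerivAt {f k : ℝ → E} {a : ℝ} (hf : ContinuousOn f (Ici a))
    (hderiv : ∀ t > a, HasDerivAt f (k t) t) (hk : ContinuousOn k (Ici a)) {t : ℝ}
    (ht : t ≥ a) : f t = f a + ∫ s in a..t, k s := by
  rw [intervalIntegral.integral_eq_sub_of_hasDerivAt_of_le ht (hf.mono Icc_subset_Ici_self)
    (fun s hs => hderiv s hs.1)
    (hk.mono (by rw [uIcc_of_le ht]; exact Icc_subset_Ici_self)).intervalIntegrable]
  abel

end Calculus

section ODE

variable {E : Type*} [NormedAddCommGroup E] [NormedSpace ℝ E] {v : E → E}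

theorem IsIntegralCurveOn.eqOn_Icc (hv : LocallyLipschitz v) {f g : ℝ → E} {a b : ℝ}
    (hf : IsIntegralCurveOn f (fun _ => v) (Icc a b))
    (hg : IsIntegralCurveOn g (fun _ => v) (Icc a b)) (ha : f a = g a) :
    EqOn f g (Icc a b) := by
  set K := f '' Icc a b ∪ g '' Icc a b
  obtain ⟨L, hL⟩ := LocallyLipschitzOn.exists_lipschitzOnWith_of_compact
    ((isCompact_Icc.image_of_continuousOn hf.continuousOn).union
      (isCompact_Icc.image_of_continuousOn hg.continuousOn)) hv.locallyLipschitzOn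
  have hright : ∀ h : ℝ → E, IsIntegralCurveOn h (fun _ => v) (Icc a b) →
      ∀ t ∈ Ico a b, HasDerivWithinAt h (v (h t)) (Ici t) t := fun h hh t ht =>
    (hh t (Ico_subset_Icc_self ht)).mono_of_mem_nhdsWithin (Icc_mem_nhdsGE_of_mem ht)
  exact ODE_solution_unique_of_mem_Icc_right (s := fun _ => K) (fun _ _ => hL)
    hf.continuousOn (hright f hf) (fun _ ht => .inl (mem_image_of_mem f (Ico_subset_Icc_self ht)))
    hg.continuousOn (hright g hg) (fun _ ht => .inr (mem_image_of_mem g (Ico_subset_Icc_self ht)))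
    ha

theorem IsIntegralCurveOn.eqOn_Ici (hv : LocallyLipschitz v) {f g : ℝ → E} {a : ℝ}
    (hf : IsIntegralCurveOn f (fun _ => v) (Ici a))
    (hg : IsIntegralCurveOn g (fun _ => v) (Ici a)) (ha : f a = g a) :
    EqOn f g (Ici a) := fun _ ht =>
  (hf.mono Icc_subset_Ici_self).eqOn_Icc hv (hg.mono Icc_subset_Ici_self) ha ⟨ht, le_rfl⟩

variable [ProperSpace E]

theorem exists_isIntegralCurveOn_Icc {C : ℝ} (hC : ∀ x, ‖v x‖ ≤ C) (hv : LocallyLipschitz v)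
    (x₀ : E) {T : ℝ} (hT : 0 ≤ T) :
    ∃ f : ℝ → E, f 0 = x₀ ∧ IsIntegralCurveOn f (fun _ => v) (Icc 0 T) := by
  have hC₀ : 0 ≤ C := (norm_nonneg _).trans (hC x₀)
  -- a solution on `[0, T]` cannot leave the ball of radius `C * T`
  obtain ⟨K, hK⟩ := LocallyLipschitzOn.exists_lipschitzOnWith_of_compact
    (isCompact_closedBall x₀ (C * T)) hv.locallyLipschitzOn
  have hPL := IsPicardLindelof.of_time_independent (t₀ := ⟨0, left_mem_Icc.2 hT⟩)
    (a := ⟨C * T, by positivity⟩) (r := 0) (L := ⟨C, hC₀⟩) (fun x _ => hC x) hK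
    (by simp [max_eq_left hT]; exact le_rfl)
  exact hPL.exists_eq_forall_mem_Icc_hasDerivWithinAt₀

theorem exists_isIntegralCurveOn_Ici {C : ℝ} (hC : ∀ x, ‖v x‖ ≤ C) (hv : LocallyLipschitz v)
    (x₀ : E) : ∃ f : ℝ → E, f 0 = x₀ ∧ IsIntegralCurveOn f (fun _ => v) (Ici 0) := by
  choose sol hsol₀ hsol using fun n : ℕ => exists_isIntegralCurveOn_Icc hC hv x₀ n.cast_nonneg
  have hagree : ∀ m n : ℕ, EqOn (sol m) (sol n) (Icc 0 (min (m : ℝ) n)) := fun m n =>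
    ((hsol m).mono (Icc_subset_Icc_right (min_le_left _ _))).eqOn_Icc hv
      ((hsol n).mono (Icc_subset_Icc_right (min_le_right _ _))) ((hsol₀ m).trans (hsol₀ n).symm)
  set f : ℝ → E := fun t => sol (⌊t⌋₊ + 1) t
  have hf : ∀ n : ℕ, EqOn f (sol n) (Icc 0 n) := fun n t ht =>
    hagree _ n ⟨ht.1, le_min (by exact_mod_cast (Nat.lt_floor_add_one t).le) ht.2⟩
  refine ⟨f, hsol₀ _, fun t ht => ?_⟩
  set n := ⌊t⌋₊ + 1
  have htn : t ∈ Icc 0 (n : ℝ) := ⟨ht, by exact_mod_cast (Nat.lt_floor_add_one t).le⟩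
  have hnhds : Icc 0 (n : ℝ) ∈ 𝓝[Ici 0] t := by
    rw [← Ici_inter_Iic]
    exact inter_mem_nhdsWithin _ (Iic_mem_nhds (by exact_mod_cast Nat.lt_floor_add_one t))
  rw [hf n htn]
  exact ((hsol n t htn).mono_of_mem_nhdsWithin hnhds).congr_of_eventuallyEq
    (eventually_of_mem hnhds (hf n)) (hf n htn)

end ODE

section Desingularization

theorem hasDerivAt_rpow_one_sub {Y : ℝ → ℝ} {c γ t : ℝ} (hY : 0 < Y t)
    (h : HasDerivAt Y (c * Y t ^ γ) t) :
    HasDerivAt (fun s => Y s ^ (1 - γ)) ((1 - γ) * c) t := by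
  convert h.rpow_const (p := 1 - γ) (.inl hY.ne') using 1
  have h1 : Y t ^ γ * Y t ^ (1 - γ - 1) = 1 := by
    rw [← Real.rpow_add hY]
    norm_num
  linear_combination (-(1 - γ) * c) * h1

theorem hasDerivAt_rpow_inv_one_sub {Z : ℝ → ℝ} {c γ t : ℝ} (hγ : γ ≠ 1) (hZ : 0 < Z t)
    (h : HasDerivAt Z ((1 - γ) * c) t) :
    HasDerivAt (fun s => Z s ^ (1 - γ)⁻¹) (c * (Z t ^ (1 - γ)⁻¹) ^ γ) t := by
  convert h.rpow_const (.inl hZ.ne') using 1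
  set p := (1 - γ)⁻¹
  have h1 : (1 - γ) * p = 1 := mul_inv_cancel₀ (sub_ne_zero.2 hγ.symm)
  have h2 : p * γ = p - 1 := by linear_combination -h1
  rw [← Real.rpow_mul hZ.le, h2]
  linear_combination (-c * Z t ^ (p - 1)) * h1

variable {E : Type*} [NormedAddCommGroup E]
  {γ : ℝ} {ψ : E × ℝ → E} {φ : E × ℝ → ℝ} {x₀ : E}

noncomputable def desingularizedField (γ : ℝ) (ψ : E × ℝ → E) (φ : E × ℝ → ℝ) (q : E × ℝ) :
    E × ℝ :=
  (ψ (q.1, q.2 ^ (1 - γ)⁻¹), (1 - γ) * φ (q.1, q.2 ^ (1 - γ)⁻¹))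

theorem continuous_desingularizedField (hγ : γ ≤ 1) (hψ : Continuous ψ) (hφ : Continuous φ) :
    Continuous (desingularizedField γ ψ φ) := by
  have hq : Continuous fun q : E × ℝ => (q.1, q.2 ^ (1 - γ)⁻¹) :=
    continuous_fst.prodMk
      ((Real.continuous_rpow_const (inv_nonneg.2 (sub_nonneg.2 hγ))).comp continuous_snd)
  exact (hψ.comp hq).prodMk (continuous_const.mul (hφ.comp hq))

theorem locallyLipschitz_desingularizedField (hγ₀ : 0 ≤ γ) (hγ₁ : γ < 1)
    (hψ : LocallyLipschitz ψ) (hφ : LocallyLipschitz φ) :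
    LocallyLipschitz (desingularizedField γ ψ φ) := by
  have hp : LocallyLipschitz fun z : ℝ => z ^ (1 - γ)⁻¹ :=
    (Real.contDiff_rpow_const_of_le (n := 1)
      (by simpa using (one_le_inv₀ (sub_pos.2 hγ₁)).2 (by linarith))).locallyLipschitz
  have hq : LocallyLipschitz fun q : E × ℝ => (q.1, q.2 ^ (1 - γ)⁻¹) :=
    LipschitzWith.prod_fst.locallyLipschitz.prodMk
      (hp.comp LipschitzWith.prod_snd.locallyLipschitz)
  exact (hψ.comp hq).prodMk ((lipschitzWith_smul (1 - γ)).locallyLipschitz.comp (hφ.comp hq))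

theorem exists_norm_desingularizedField_le (hψ : ∃ M, ∀ q, ‖ψ q‖ ≤ M)
    (hφ : ∃ M, ∀ q, |φ q| ≤ M) : ∃ C, ∀ q, ‖desingularizedField γ ψ φ q‖ ≤ C := by
  obtain ⟨Mψ, hMψ⟩ := hψ
  obtain ⟨Mφ, hMφ⟩ := hφ
  refine ⟨max Mψ (|1 - γ| * Mφ), fun q => max_le_max (hMψ _) ?_⟩
  rw [Real.norm_eq_abs, desingularizedField, abs_mul]
  exact mul_le_mul_of_nonneg_left (hMφ _) (abs_nonneg _)

variable [NormedSpace ℝ E]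

structure IsPositiveSolution (γ : ℝ) (ψ : E × ℝ → E) (φ : E × ℝ → ℝ) (x₀ : E) (X : ℝ → E)
    (Y : ℝ → ℝ) : Prop where
  continuousOn_x : ContinuousOn X (Ici 0)
  continuousOn_y : ContinuousOn Y (Ici 0)
  y_pos : ∀ t > (0:ℝ), 0 < Y t
  x_zero : X 0 = x₀
  y_zero : Y 0 = 0
  x_eq : ∀ t ≥ (0:ℝ), X t = x₀ + ∫ s in (0:ℝ)..t, ψ (X s, Y s)
  y_eq : ∀ t ≥ (0:ℝ), Y t = ∫ s in (0:ℝ)..t, φ (X s, Y s) * (Y s) ^ γ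

theorem IsPositiveSolution.y_nonneg {X : ℝ → E} {Y : ℝ → ℝ}
    (h : IsPositiveSolution γ ψ φ x₀ X Y) {t : ℝ} (ht : t ≥ 0) : 0 ≤ Y t := by
  rcases ht.eq_or_lt with rfl | ht
  · exact h.y_zero.ge
  · exact (h.y_pos t ht).le

variable [CompleteSpace E]

theorem IsPositiveSolution.isIntegralCurveOn (hγ₀ : 0 ≤ γ) (hγ₁ : γ < 1) (hψ : Continuous ψ)
    (hφ : Continuous φ) {X : ℝ → E} {Y : ℝ → ℝ} (h : IsPositiveSolution γ ψ φ x₀ X Y) :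
    IsIntegralCurveOn (fun t => (X t, Y t ^ (1 - γ))) (fun _ => desingularizedField γ ψ φ)
      (Ici 0) := by
  have hXY := h.continuousOn_x.prodMk h.continuousOn_y
  have hW : ContinuousOn (fun t => (X t, Y t ^ (1 - γ))) (Ici 0) :=
    h.continuousOn_x.prodMk (h.continuousOn_y.rpow_const fun _ _ => .inr (by linarith))
  refine hasDerivWithinAt_Ici_of_hasDerivAt hW (fun t ht => ?_)
    ((continuous_desingularizedField hγ₁.le hψ hφ).comp_continuousOn hW)
  have hYt := h.y_pos t ht
  have hv : desingularizedField γ ψ φ (X t, Y t ^ (1 - γ)) =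
      (ψ (X t, Y t), (1 - γ) * φ (X t, Y t)) := by
    simp only [desingularizedField, Real.rpow_rpow_inv hYt.le (sub_ne_zero.2 hγ₁.ne')]
  refine ((hasDerivAt_of_forall_eq_add_integral h.x_eq (hψ.comp_continuousOn hXY) ht).prodMk
    (hasDerivAt_rpow_one_sub hYt (hasDerivAt_of_forall_eq_add_integral (c := (0:ℝ))
      (k := fun s => φ (X s, Y s) * Y s ^ γ) (fun s hs => by rw [zero_add]; exact h.y_eq s hs)
      ?_ ht))).congr_deriv hv.symm
  exact (hφ.comp_continuousOn hXY).mul (h.continuousOn_y.rpow_const fun _ _ => .inr hγ₀)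

theorem isPositiveSolution_of_isIntegralCurveOn (hγ₀ : 0 ≤ γ) (hγ₁ : γ < 1)
    (hψ : Continuous ψ) (hφ : Continuous φ) (hφpos : ∀ x, 0 < φ (x, 0)) {W : ℝ → E × ℝ}
    (hW : IsIntegralCurveOn W (fun _ => desingularizedField γ ψ φ) (Ici 0))
    (hW₀ : W 0 = (x₀, 0)) :
    IsPositiveSolution γ ψ φ x₀ (fun t => (W t).1) (fun t => (W t).2 ^ (1 - γ)⁻¹) := by
  have hp : (1 - γ)⁻¹ ≠ 0 := inv_ne_zero (sub_ne_zero.2 hγ₁.ne')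
  have hderiv : ∀ t > 0, HasDerivAt W (desingularizedField γ ψ φ (W t)) t := fun t ht =>
    (hW t ht.le).hasDerivAt (Ici_mem_nhds ht)
  have hZ : ∀ t > 0, 0 < (W t).2 := fun t ht =>
    pos_of_deriv_pos_at_zeros (f := fun t => (W t).2)
      (fun s hs => (hW s hs).snd) (by simp [hW₀])
      (fun s _ hs => by
        simp only [desingularizedField, hs, Real.zero_rpow hp]
        exact mul_pos (sub_pos.2 hγ₁) (hφpos _)) ht
  have hX : ContinuousOn (fun t => (W t).1) (Ici 0) :=
    continuous_fst.comp_continuousOn hW.continuousOn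
  have hY : ContinuousOn (fun t => (W t).2 ^ (1 - γ)⁻¹) (Ici 0) :=
    (continuous_snd.comp_continuousOn hW.continuousOn).rpow_const fun _ _ =>
      .inr (inv_nonneg.2 (sub_nonneg.2 hγ₁.le))
  refine ⟨hX, hY, fun t ht => Real.rpow_pos_of_pos (hZ t ht) _, by simp [hW₀],
    by simp [hW₀, Real.zero_rpow hp], fun t ht => ?_, fun t ht => ?_⟩
  · rw [eq_add_integral_of_hasDerivAt hX (fun s hs => (hderiv s hs).fst)
      (hψ.comp_continuousOn (hX.prodMk hY)) ht, hW₀]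
    rfl
  · rw [eq_add_integral_of_hasDerivAt hY
      (fun s hs => hasDerivAt_rpow_inv_one_sub hγ₁.ne (hZ s hs) (hderiv s hs).snd)
      ((hφ.comp_continuousOn (hX.prodMk hY)).mul (hY.rpow_const fun _ _ => .inr hγ₀)) ht]
    simp [hW₀, Real.zero_rpow hp]

theorem IsPositiveSolution.unique (hγ₀ : 0 ≤ γ) (hγ₁ : γ < 1) (hψ : LocallyLipschitz ψ)
    (hφ : LocallyLipschitz φ) {X X' : ℝ → E} {Y Y' : ℝ → ℝ}
    (h : IsPositiveSolution γ ψ φ x₀ X Y) (h' : IsPositiveSolution γ ψ φ x₀ X' Y') :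
    ∀ t ≥ (0:ℝ), X' t = X t ∧ Y' t = Y t := by
  intro t ht
  have hγ : 1 - γ ≠ 0 := sub_ne_zero.2 hγ₁.ne'
  have hW := (h'.isIntegralCurveOn hγ₀ hγ₁ hψ.continuous hφ.continuous).eqOn_Ici
    (locallyLipschitz_desingularizedField hγ₀ hγ₁ hψ hφ)
    (h.isIntegralCurveOn hγ₀ hγ₁ hψ.continuous hφ.continuous)
    (by simp [h.x_zero, h'.x_zero, h.y_zero, h'.y_zero]) ht
  simp only [Prod.mk.injEq] at hW
  refine ⟨hW.1, ?_⟩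
  rw [← Real.rpow_rpow_inv (h'.y_nonneg ht) hγ, hW.2, Real.rpow_rpow_inv (h.y_nonneg ht) hγ]

theorem exists_isPositiveSolution [ProperSpace E] (hγ₀ : 0 ≤ γ) (hγ₁ : γ < 1)
    (hψb : ∃ M, ∀ q, ‖ψ q‖ ≤ M) (hφb : ∃ M, ∀ q, |φ q| ≤ M) (hψ : LocallyLipschitz ψ)
    (hφ : LocallyLipschitz φ) (hφpos : ∀ x, 0 < φ (x, 0)) (x₀ : E) :
    ∃ X Y, IsPositiveSolution γ ψ φ x₀ X Y := by
  obtain ⟨C, hC⟩ := exists_norm_desingularizedField_le (γ := γ) hψb hφb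
  obtain ⟨W, hW₀, hW⟩ := exists_isIntegralCurveOn_Ici hC
    (locallyLipschitz_desingularizedField hγ₀ hγ₁ hψ hφ) (x₀, 0)
  exact ⟨_, _, isPositiveSolution_of_isIntegralCurveOn hγ₀ hγ₁ hψ.continuous hφ.continuous hφpos
    hW hW₀⟩

end Desingularization

theorem stmt0_general (d : ℕ) (γ : ℝ) (hγ : γ ∈ Set.Ioo (0:ℝ) 1)
    (x0 : EuclideanSpace ℝ (Fin d))
    (ψ : EuclideanSpace ℝ (Fin d) × ℝ → EuclideanSpace ℝ (Fin d))
    (φ : EuclideanSpace ℝ (Fin d) × ℝ → ℝ)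
    (hψb : ∃ M, ∀ p, ‖ψ p‖ ≤ M) (hφb : ∃ M, ∀ p, |φ p| ≤ M)
    (hψl : LocallyLipschitz ψ) (hφl : LocallyLipschitz φ)
    (hφpos : ∀ x, 0 < φ (x, 0)) :
    ∃ X : ℝ → EuclideanSpace ℝ (Fin d), ∃ Y : ℝ → ℝ,
      (ContinuousOn X (Ici 0) ∧ ContinuousOn Y (Ici 0) ∧
        (∀ t > (0:ℝ), 0 < Y t) ∧ X 0 = x0 ∧ Y 0 = 0 ∧
        (∀ t ≥ (0:ℝ), X t = x0 + ∫ s in (0:ℝ)..t, ψ (X s, Y s)) ∧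
        (∀ t ≥ (0:ℝ), Y t = ∫ s in (0:ℝ)..t, φ (X s, Y s) * (Y s) ^ γ)) ∧
      (∀ X' : ℝ → EuclideanSpace ℝ (Fin d), ∀ Y' : ℝ → ℝ,
        (ContinuousOn X' (Ici 0) ∧ ContinuousOn Y' (Ici 0) ∧
          (∀ t > (0:ℝ), 0 < Y' t) ∧ X' 0 = x0 ∧ Y' 0 = 0 ∧
          (∀ t ≥ (0:ℝ), X' t = x0 + ∫ s in (0:ℝ)..t, ψ (X' s, Y' s)) ∧
          (∀ t ≥ (0:ℝ), Y' t = ∫ s in (0:ℝ)..t, φ (X' s, Y' s) * (Y' s) ^ γ)) →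
        ∀ t ≥ (0:ℝ), X' t = X t ∧ Y' t = Y t) := by
  obtain ⟨X, Y, h⟩ := exists_isPositiveSolution hγ.1.le hγ.2 hψb hφb hψl hφl hφpos x0
  refine ⟨X, Y, ⟨h.continuousOn_x, h.continuousOn_y, h.y_pos, h.x_zero, h.y_zero, h.x_eq, h.y_eq⟩,
    ?_⟩
  rintro X' Y' ⟨h₁, h₂, h₃, h₄, h₅, h₆, h₇⟩
  exact h.unique hγ.1.le hγ.2 hψl hφl ⟨h₁, h₂, h₃, h₄, h₅, h₆, h₇⟩

/-- Existence and uniqueness of the extremal solution `(X⁺, Y⁺)` of the unperturbed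
system `dX = ψ(X,Y) dt`, `dY = φ(X,Y) Y^γ dt`, starting from `(x⁰, 0)`, among solutions
with `Y(t) > 0` for all `t > 0`, in the repulsive case `φ(x,0) > 0`. -/
theorem stmt0 (d : ℕ) (hd : 1 ≤ d) (γ : ℝ) (hγ : γ ∈ Set.Ioo (0:ℝ) 1)
    (x0 : EuclideanSpace ℝ (Fin d))
    (ψ : EuclideanSpace ℝ (Fin d) × ℝ → EuclideanSpace ℝ (Fin d))
    (φ : EuclideanSpace ℝ (Fin d) × ℝ → ℝ)
    (hψb : ∃ M, ∀ p, ‖ψ p‖ ≤ M) (hφb : ∃ M, ∀ p, |φ p| ≤ M)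
    (hψl : LocallyLipschitz ψ) (hφl : LocallyLipschitz φ)
    (hφpos : ∀ x, 0 < φ (x, 0)) :
    ∃ X : ℝ → EuclideanSpace ℝ (Fin d), ∃ Y : ℝ → ℝ,
      (ContinuousOn X (Ici 0) ∧ ContinuousOn Y (Ici 0) ∧
        (∀ t > (0:ℝ), 0 < Y t) ∧ X 0 = x0 ∧ Y 0 = 0 ∧
        (∀ t ≥ (0:ℝ), X t = x0 + ∫ s in (0:ℝ)..t, ψ (X s, Y s)) ∧
        (∀ t ≥ (0:ℝ), Y t = ∫ s in (0:ℝ)..t, φ (X s, Y s) * (Y s) ^ γ)) ∧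
      (∀ X' : ℝ → EuclideanSpace ℝ (Fin d), ∀ Y' : ℝ → ℝ,
        (ContinuousOn X' (Ici 0) ∧ ContinuousOn Y' (Ici 0) ∧
          (∀ t > (0:ℝ), 0 < Y' t) ∧ X' 0 = x0 ∧ Y' 0 = 0 ∧
          (∀ t ≥ (0:ℝ), X' t = x0 + ∫ s in (0:ℝ)..t, ψ (X' s, Y' s)) ∧
          (∀ t ≥ (0:ℝ), Y' t = ∫ s in (0:ℝ)..t, φ (X' s, Y' s) * (Y' s) ^ γ)) →
        ∀ t ≥ (0:ℝ), X' t = X t ∧ Y' t = Y t) :=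
  stmt0_general d γ hγ x0 ψ φ hψb hφb hψl hφl hφpos
end

section
/- Let γ ∈ (0,1), let X : [0,∞) → ℝ^d be continuous, let φ : ℝ^d × ℝ → ℝ be continuous, and let Ỹ : [0,∞) → ℝ be a continuous function with Ỹ(0) = 0, Ỹ(t) > 0 for all t > 0, satisfying Ỹ(t) = (1-γ) ∫₀ᵗ φ(X(s), Ỹ(s)^{1/(1-γ)}) ds for all t ≥ 0. Then the function Y(t) := Ỹ(t)^{1/(1-γ)} satisfies Y(t) = ∫₀ᵗ φ(X(s),Y(s)) Y(s)^γ ds for all t ≥ 0. -/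
/-! Where `Ỹ > 0`, the integral equation makes `Ỹ` differentiable with `Ỹ' = (1-γ) φ`, and the
chain rule for `Y = Ỹ ^ (1/(1-γ))` gives `Y' = φ Y ^ γ`, because `1/(1-γ) - 1 = γ/(1-γ)`.
As `Y` is continuous up to `0` with `Y 0 = 0`, the fundamental theorem of calculus on `[0, t]`
only needs this derivative on the open interval `(0, t)`, where `Ỹ > 0`. -/

open MeasureTheory Set Filter

theorem ContinuousOn.hasDerivAt_integral_of_Ici {E : Type*} [NormedAddCommGroup E]
    [NormedSpace ℝ E] [CompleteSpace E] {f : ℝ → E} {a s : ℝ}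
    (hf : ContinuousOn f (Ici a)) (hs : a < s) :
    HasDerivAt (fun t => ∫ x in a..t, f x) (f s) s :=
  intervalIntegral.integral_hasDerivAt_right
    ((hf.mono Icc_subset_Ici_self).intervalIntegrable_of_Icc hs.le)
    ⟨Ici a, Ici_mem_nhds hs, hf.aestronglyMeasurable measurableSet_Ici⟩
    (hf.continuousAt (Ici_mem_nhds hs))

theorem HasDerivAt.rpow_one_div_one_sub {y : ℝ → ℝ} {g γ s : ℝ} (hγ : γ < 1)
    (hy : HasDerivAt y ((1 - γ) * g) s) (hys : 0 < y s) :
    HasDerivAt (fun t => y t ^ (1 / (1 - γ))) (g * (y s ^ (1 / (1 - γ))) ^ γ) s := by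
  have h1γ : 1 - γ ≠ 0 := (sub_pos.2 hγ).ne'
  convert hy.rpow_const (p := 1 / (1 - γ)) (Or.inl hys.ne') using 1
  have hexp : 1 / (1 - γ) * γ = 1 / (1 - γ) - 1 := by field_simp; ring
  rw [← Real.rpow_mul hys.le, hexp]
  field_simp

/-- Substitution lemma: if `Ỹ` solves the regularized integral equation
`Ỹ(t) = (1-γ) ∫₀ᵗ φ(X(s), Ỹ(s)^{1/(1-γ)}) ds`, with `Ỹ(0) = 0` and `Ỹ(t) > 0` for `t > 0`,
then `Y := Ỹ^{1/(1-γ)}` solves the degenerate equation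
`Y(t) = ∫₀ᵗ φ(X(s), Y(s)) Y(s)^γ ds`. -/
theorem stmt1 (d : ℕ) (γ : ℝ) (hγ : γ ∈ Set.Ioo (0:ℝ) 1)
    (X : ℝ → EuclideanSpace ℝ (Fin d)) (hX : ContinuousOn X (Ici 0))
    (φ : EuclideanSpace ℝ (Fin d) × ℝ → ℝ) (hφ : Continuous φ)
    (Yt : ℝ → ℝ) (hYt : ContinuousOn Yt (Ici 0)) (hYt0 : Yt 0 = 0)
    (hYtpos : ∀ t > (0:ℝ), 0 < Yt t)
    (heq : ∀ t ≥ (0:ℝ),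
      Yt t = (1 - γ) * ∫ s in (0:ℝ)..t, φ (X s, (Yt s) ^ (1/(1-γ)))) :
    ∀ t ≥ (0:ℝ), (Yt t) ^ (1/(1-γ)) =
      ∫ s in (0:ℝ)..t, φ (X s, (Yt s) ^ (1/(1-γ))) * ((Yt s) ^ (1/(1-γ))) ^ γ := by
  intro t ht
  have hp : 0 < 1 / (1 - γ) := one_div_pos.2 (sub_pos.2 hγ.2)
  have hY : ContinuousOn (fun s => Yt s ^ (1 / (1 - γ))) (Ici 0) :=
    hYt.rpow_const fun _ _ => Or.inr hp.le
  have hf : ContinuousOn (fun s => φ (X s, Yt s ^ (1 / (1 - γ)))) (Ici 0) :=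
    hφ.comp_continuousOn (hX.prodMk hY)
  have hYt_deriv (s : ℝ) (hs : 0 < s) :
      HasDerivAt Yt ((1 - γ) * φ (X s, Yt s ^ (1 / (1 - γ)))) s :=
    ((hf.hasDerivAt_integral_of_Ici hs).const_mul _).congr_of_eventuallyEq
      (eventually_of_mem (Ici_mem_nhds hs) heq)
  have hrhs : ContinuousOn (fun s => φ (X s, Yt s ^ (1 / (1 - γ))) * (Yt s ^ (1 / (1 - γ))) ^ γ)
      (Icc 0 t) :=
    (hf.mul (hY.rpow_const fun _ _ => Or.inr hγ.1.le)).mono Icc_subset_Ici_self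
  rw [intervalIntegral.integral_eq_sub_of_hasDerivAt_of_le ht (hY.mono Icc_subset_Ici_self)
    (fun s hs => (hYt_deriv s hs.1).rpow_one_div_one_sub hγ.2 (hYtpos s hs.1))
    (hrhs.intervalIntegrable_of_Icc ht), hYt0, Real.zero_rpow hp.ne', sub_zero]
end

section
/- Let T > 0, γ ∈ (0,1), c₁ > 0, and let ψ : ℝ^d × ℝ → ℝ^d and φ : ℝ^d × ℝ → ℝ be bounded Lipschitz continuous functions with φ ≥ c₁ everywhere. For x ∈ ℝ^d and y > 0, let (X^{x,y}, Y^{x,y}) denote the unique continuous solution on [0,T] of X(t) = x + ∫₀ᵗ ψ(X(s),Y(s)) ds, Y(t) = y + ∫₀ᵗ φ(X(s),Y(s)) Y(s)^γ ds (this solution satisfies Y^{x,y}(t) > 0 on [0,T]). Then: for every δ > 0 and every R ≥ 1 there exists α > 0 such that for every x with |x| ≤ R, every y ∈ [1/R, R], every continuous f = (f_X, f_Y) : [0,T] → ℝ^d × ℝ with f(0) = 0 and sup_{t∈[0,T]} |f(t)| < α, and every pair of continuous functions (X_f, Y_f) on [0,T] satisfying X_f(t) = x + ∫₀ᵗ ψ(X_f(s),Y_f(s))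 ds + f_X(t) and Y_f(t) = y + ∫₀ᵗ φ(X_f(s),Y_f(s)) Y_f(s)^γ ds + f_Y(t), one has |X_f(t) − X^{x,y}(t)| + |Y_f(t) − Y^{x,y}(t)| ≤ δ for all t ∈ [0,T]. -/
/-!
Since `φ ≥ 0`, the unperturbed `Y₀` is nondecreasing, so `Y₀ ≥ y ≥ 1/R`; since `Y₀ ^ γ ≤ 1 + Y₀`,
Gronwall bounds `Y₀` on `[0, T]` by a constant `B` depending only on `R`, `T` and `sup |φ|`.
On `[m, ∞)`, `m = 1/(2R)`, the map `z ↦ z ^ γ` is Lipschitz, so as long as the gap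
`‖Xf - X₀‖ + |Yf - Y₀|` stays below `m` (which keeps `Yf ≥ m`) the integrands differ by at most
`L` times the gap, and Gronwall gives gap `≤ 2α e^{LT}`. Choosing `α` with `2α e^{LT} < min δ m`,
this bound is strictly below the threshold `m`, so a continuity argument shows that the gap
never reaches `m`, and then the bound holds on all of `[0, T]`.
-/

open MeasureTheory Set Real Filter Topology

theorem ContinuousOn.forall_le_of_bootstrap {g : ℝ → ℝ} {a b c : ℝ}
    (hg : ContinuousOn g (Icc a b)) (ha : g a ≤ c) (hstep : ∀ t ∈ Ico a b, (∀ s ∈ Icc a t, g s ≤ c) → g t < c) :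
    ∀ t ∈ Icc a b, g t ≤ c := by
  have hclosed : IsClosed ({t | g t ≤ c} ∩ Icc a b) := by
    rw [inter_comm]; exact hg.preimage_isClosed_of_isClosed isClosed_Icc isClosed_Iic
  refine fun t ht =>
    hclosed.Icc_subset_of_forall_mem_nhdsGT_of_Icc_subset ha (fun t ht hsub => ?_) ht
  have hlt : ∀ᶠ s in 𝓝[Icc a b] t, g s < c :=
    (hg t (Ico_subset_Icc_self ht)).eventually (gt_mem_nhds (hstep t ht hsub))
  exact nhdsWithin_le_of_mem (Icc_mem_nhdsGT_of_mem ht) (hlt.mono fun _ hs => hs.le)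

theorem le_mul_exp_of_le_add_mul_integral {u : ℝ → ℝ} {a L b : ℝ} (hL : 0 ≤ L)
    (hu : ContinuousOn u (Icc 0 b))
    (h : ∀ t ∈ Icc 0 b, u t ≤ a + L * ∫ s in (0:ℝ)..t, u s) :
    ∀ t ∈ Icc 0 b, u t ≤ a * exp (L * t) := by
  set w : ℝ → ℝ := fun t => a + L * ∫ s in (0:ℝ)..t, u s
  have hw_cont : ContinuousOn w (Icc 0 b) := by
    rcases lt_or_ge b 0 with hb | hb
    · simp [Icc_eq_empty_of_lt hb]
    rw [← uIcc_of_le hb] at hu ⊢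
    exact continuousOn_const.add (continuousOn_const.mul
      (intervalIntegral.continuousOn_primitive_interval hu.integrableOn_uIcc))
  have hw_deriv : ∀ t ∈ Ico 0 b, HasDerivWithinAt w (L * u t) (Ici t) t := by
    intro t ht
    have hnhds : Icc 0 b ∈ 𝓝[>] t := Icc_mem_nhdsGT_of_mem ht
    have hint : IntervalIntegrable u volume 0 t :=
      (hu.mono (Icc_subset_Icc_right ht.2.le)).intervalIntegrable_of_Icc ht.1
    exact ((intervalIntegral.integral_hasDerivWithinAt_right hint
      ((hu.stronglyMeasurableAtFilter_nhdsWithin measurableSet_Icc t).filter_mono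
        (nhdsWithin_le_of_mem hnhds))
      ((hu t (Ico_subset_Icc_self ht)).mono_of_mem_nhdsWithin hnhds)).const_mul L).const_add a
  have hw_le : ∀ t ∈ Icc 0 b, w t ≤ gronwallBound a L 0 (t - 0) :=
    le_gronwallBound_of_liminf_deriv_right_le hw_cont
      (fun t ht _ hr => (hw_deriv t ht).liminf_right_slope_le hr) (by simp [w])
      (fun t ht => by simpa using mul_le_mul_of_nonneg_left (h t (Ico_subset_Icc_self ht)) hL)
  intro t ht
  simpa [gronwallBound_ε0] using (h t ht).trans (hw_le t ht)

theorem abs_rpow_sub_rpow_le {γ m p q : ℝ} (hγ₀ : 0 ≤ γ) (hγ₁ : γ ≤ 1) (hm : 0 < m)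
    (hp : m ≤ p) (hq : m ≤ q) :
    |p ^ γ - q ^ γ| ≤ γ * m ^ (γ - 1) * |p - q| := by
  have hderiv : ∀ z ∈ Ici m, HasDerivWithinAt (fun z : ℝ => z ^ γ) (γ * z ^ (γ - 1)) (Ici m) z :=
    fun z hz => (hasDerivAt_rpow_const (Or.inl (hm.trans_le hz).ne')).hasDerivWithinAt
  have hbound : ∀ z ∈ Ici m, ‖γ * z ^ (γ - 1)‖ ≤ γ * m ^ (γ - 1) := fun z hz => by
    rw [norm_of_nonneg (mul_nonneg hγ₀ (rpow_nonneg (hm.le.trans hz) _))]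
    exact mul_le_mul_of_nonneg_left (rpow_le_rpow_of_nonpos hm hz (by linarith)) hγ₀
  simpa [Real.norm_eq_abs] using
    (convex_Ici m).norm_image_sub_le_of_norm_hasDerivWithin_le hderiv hbound hq hp

theorem rpow_le_one_add {γ z : ℝ} (hγ₀ : 0 ≤ γ) (hγ₁ : γ ≤ 1) (hz : 0 ≤ z) :
    z ^ γ ≤ 1 + z := by
  rcases le_total z 1 with h | h
  · linarith [rpow_le_one hz h hγ₀]
  · linarith [rpow_le_self_of_one_le h hγ₁]

theorem abs_mul_rpow_sub_mul_rpow_le {γ m M B a b p q : ℝ} (hγ₀ : 0 ≤ γ) (hγ₁ : γ ≤ 1)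
    (hm : 0 < m) (hp : m ≤ p) (hq : m ≤ q) (ha : |a| ≤ M) (hqB : q ^ γ ≤ B) :
    |a * p ^ γ - b * q ^ γ| ≤ M * (γ * m ^ (γ - 1)) * |p - q| + B * |a - b| := by
  have hq₀ : 0 ≤ q ^ γ := rpow_nonneg (hm.le.trans hq) γ
  calc |a * p ^ γ - b * q ^ γ| = |a * (p ^ γ - q ^ γ) + (a - b) * q ^ γ| := by ring_nf
    _ ≤ |a| * |p ^ γ - q ^ γ| + |a - b| * q ^ γ := by
        rw [← abs_mul, ← abs_of_nonneg hq₀, ← abs_mul, abs_of_nonneg hq₀]; exact abs_add_le _ _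
    _ ≤ M * (γ * m ^ (γ - 1) * |p - q|) + |a - b| * B := by
        gcongr
        · exact (abs_nonneg a).trans ha
        · exact abs_rpow_sub_rpow_le hγ₀ hγ₁ hm hp hq
    _ = M * (γ * m ^ (γ - 1)) * |p - q| + B * |a - b| := by ring

theorem norm_add_integral_add_sub_le {E : Type*} [NormedAddCommGroup E] [NormedSpace ℝ E]
    {F G : ℝ → E} {g : ℝ → ℝ} {K t : ℝ} (ht : 0 ≤ t)
    (hF : IntervalIntegrable F volume 0 t) (hG : IntervalIntegrable G volume 0 t)
    (hg : IntervalIntegrable g volume 0 t) (hFG : ∀ s ∈ Icc 0 t, ‖F s - G s‖ ≤ K * g s)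
    (x e₁ e₂ : E) :
    ‖x + (∫ s in (0:ℝ)..t, F s) + e₁ - (x + (∫ s in (0:ℝ)..t, G s) + e₂)‖
      ≤ ‖e₁ - e₂‖ + K * ∫ s in (0:ℝ)..t, g s := by
  calc ‖x + (∫ s in (0:ℝ)..t, F s) + e₁ - (x + (∫ s in (0:ℝ)..t, G s) + e₂)‖
      = ‖(e₁ - e₂) + ∫ s in (0:ℝ)..t, F s - G s‖ := by
        rw [intervalIntegral.integral_sub hF hG]; congr 1; abel
    _ ≤ ‖e₁ - e₂‖ + ∫ s in (0:ℝ)..t, ‖F s - G s‖ :=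
        (norm_add_le _ _).trans
          (add_le_add_right (intervalIntegral.norm_integral_le_integral_norm ht) _)
    _ ≤ ‖e₁ - e₂‖ + K * ∫ s in (0:ℝ)..t, g s := by
        rw [← intervalIntegral.integral_const_mul]
        gcongr
        exact intervalIntegral.integral_mono_on ht (hF.sub hG).norm (hg.const_mul K) hFG

theorem Prod.dist_le_dist_add_dist {α β : Type*} [PseudoMetricSpace α] [PseudoMetricSpace β]
    (p q : α × β) : dist p q ≤ dist p.1 q.1 + dist p.2 q.2 := by
  rw [Prod.dist_eq]; exact max_le_add_of_nonneg dist_nonneg dist_nonneg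

theorem ContinuousOn.intervalIntegrable_of_mem_Icc {E : Type*} [NormedAddCommGroup E]
    {u : ℝ → E} {T t : ℝ} (hu : ContinuousOn u (Icc 0 T)) (ht : t ∈ Icc 0 T) :
    IntervalIntegrable u volume 0 t :=
  (hu.mono (Icc_subset_Icc_right ht.2)).intervalIntegrable_of_Icc ht.1

structure IsPerturbedSolution {E : Type*} [NormedAddCommGroup E] [NormedSpace ℝ E]
    (ψ : E × ℝ → E) (φ : E × ℝ → ℝ) (γ T : ℝ) (x : E) (y : ℝ) (f : ℝ → E × ℝ)
    (X : ℝ → E) (Y : ℝ → ℝ) : Prop where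
  continuousOn_fst : ContinuousOn X (Icc 0 T)
  continuousOn_snd : ContinuousOn Y (Icc 0 T)
  eq_fst : ∀ t ∈ Icc 0 T, X t = x + (∫ s in (0:ℝ)..t, ψ (X s, Y s)) + (f t).1
  eq_snd : ∀ t ∈ Icc 0 T, Y t = y + (∫ s in (0:ℝ)..t, φ (X s, Y s) * Y s ^ γ) + (f t).2

namespace IsPerturbedSolution

variable {E : Type*} [NormedAddCommGroup E] [NormedSpace ℝ E] {ψ : E × ℝ → E} {φ : E × ℝ → ℝ}
  {γ T : ℝ} {x : E} {y : ℝ} {f : ℝ → E × ℝ} {X : ℝ → E} {Y : ℝ → ℝ}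

theorem apply_zero (h : IsPerturbedSolution ψ φ γ T x y f X Y) (hT : 0 ≤ T) :
    X 0 = x + (f 0).1 ∧ Y 0 = y + (f 0).2 :=
  ⟨by simpa using h.eq_fst 0 ⟨le_rfl, hT⟩, by simpa using h.eq_snd 0 ⟨le_rfl, hT⟩⟩

theorem continuousOn_integrand_fst (h : IsPerturbedSolution ψ φ γ T x y f X Y)
    (hψ : Continuous ψ) : ContinuousOn (fun s => ψ (X s, Y s)) (Icc 0 T) :=
  hψ.comp_continuousOn (h.continuousOn_fst.prodMk h.continuousOn_snd)

theorem continuousOn_integrand_snd (h : IsPerturbedSolution ψ φ γ T x y f X Y)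
    (hφ : Continuous φ) (hγ : 0 ≤ γ) :
    ContinuousOn (fun s => φ (X s, Y s) * Y s ^ γ) (Icc 0 T) :=
  (hφ.comp_continuousOn (h.continuousOn_fst.prodMk h.continuousOn_snd)).mul
    (h.continuousOn_snd.rpow_const fun _ _ => Or.inr hγ)

theorem le_snd (h : IsPerturbedSolution ψ φ γ T x y 0 X Y) (hφ : ∀ p, 0 ≤ φ p)
    (hY : ∀ t ∈ Icc 0 T, 0 ≤ Y t) : ∀ t ∈ Icc 0 T, y ≤ Y t := by
  intro t ht
  have hint : 0 ≤ ∫ s in (0:ℝ)..t, φ (X s, Y s) * Y s ^ γ :=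
    intervalIntegral.integral_nonneg ht.1 fun s hs =>
      mul_nonneg (hφ _) (rpow_nonneg (hY s ⟨hs.1, hs.2.trans ht.2⟩) _)
  simpa [h.eq_snd t ht] using hint

theorem snd_le (h : IsPerturbedSolution ψ φ γ T x y 0 X Y) (hφ : Continuous φ)
    (hγ₀ : 0 ≤ γ) (hγ₁ : γ ≤ 1) {M : ℝ} (hM : 0 ≤ M) (hφM : ∀ p, φ p ≤ M)
    (hY : ∀ t ∈ Icc 0 T, 0 ≤ Y t) : ∀ t ∈ Icc 0 T, Y t ≤ (y + M * T) * exp (M * t) := by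
  refine le_mul_exp_of_le_add_mul_integral hM h.continuousOn_snd fun t ht => ?_
  have hY_int := h.continuousOn_snd.intervalIntegrable_of_mem_Icc ht
  calc Y t = y + ∫ s in (0:ℝ)..t, φ (X s, Y s) * Y s ^ γ := by simpa using h.eq_snd t ht
    _ ≤ y + ∫ s in (0:ℝ)..t, M * (1 + Y s) := by
        gcongr
        refine intervalIntegral.integral_mono_on ht.1
          ((h.continuousOn_integrand_snd hφ hγ₀).intervalIntegrable_of_mem_Icc ht)
          ((intervalIntegrable_const.add hY_int).const_mul M) fun s hs => ?_
        have hYs := hY s ⟨hs.1, hs.2.trans ht.2⟩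
        exact mul_le_mul (hφM _) (rpow_le_one_add hγ₀ hγ₁ hYs) (rpow_nonneg hYs _) hM
    _ = y + M * t + M * ∫ s in (0:ℝ)..t, Y s := by
        rw [intervalIntegral.integral_const_mul, intervalIntegral.integral_add
          intervalIntegrable_const hY_int, intervalIntegral.integral_const, smul_eq_mul]
        ring
    _ ≤ y + M * T + M * ∫ s in (0:ℝ)..t, Y s := by gcongr; exact ht.2

theorem gap_le_add_integral {f₁ f₂ : ℝ → E × ℝ} {X₁ X₂ : ℝ → E} {Y₁ Y₂ : ℝ → ℝ}
    (h₁ : IsPerturbedSolution ψ φ γ T x y f₁ X₁ Y₁)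
    (h₂ : IsPerturbedSolution ψ φ γ T x y f₂ X₂ Y₂)
    {Kψ Kφ : NNReal} (hψ : LipschitzWith Kψ ψ) (hφ : LipschitzWith Kφ φ)
    {M : ℝ} (hφM : ∀ p, |φ p| ≤ M) (hγ₀ : 0 ≤ γ) (hγ₁ : γ ≤ 1)
    {m B α τ : ℝ} (hm : 0 < m) (hY₂m : ∀ t ∈ Icc 0 T, 2 * m ≤ Y₂ t)
    (hY₂B : ∀ t ∈ Icc 0 T, Y₂ t ^ γ ≤ B) (hf : ∀ t ∈ Icc 0 T, ‖f₁ t - f₂ t‖ ≤ α)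
    (hτ : τ ≤ T) (hclose : ∀ s ∈ Icc 0 τ, ‖X₁ s - X₂ s‖ + |Y₁ s - Y₂ s| ≤ m) :
    ∀ t ∈ Icc 0 τ, ‖X₁ t - X₂ t‖ + |Y₁ t - Y₂ t| ≤
      2 * α + (Kψ + M * (γ * m ^ (γ - 1)) + B * Kφ) *
        ∫ s in (0:ℝ)..t, ‖X₁ s - X₂ s‖ + |Y₁ s - Y₂ s| := by
  intro t ht
  have htT : t ∈ Icc 0 T := ⟨ht.1, ht.2.trans hτ⟩
  set g : ℝ → ℝ := fun s => ‖X₁ s - X₂ s‖ + |Y₁ s - Y₂ s|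
  have hg_int : IntervalIntegrable g volume 0 t :=
    (((h₁.continuousOn_fst.sub h₂.continuousOn_fst).norm).add
      (h₁.continuousOn_snd.sub h₂.continuousOn_snd).abs).intervalIntegrable_of_mem_Icc htT
  have hdist : ∀ s, dist (X₁ s, Y₁ s) (X₂ s, Y₂ s) ≤ g s := fun s =>
    (Prod.dist_le_dist_add_dist _ _).trans_eq (by simp [g, dist_eq_norm])
  have hX : ‖X₁ t - X₂ t‖ ≤ ‖(f₁ t).1 - (f₂ t).1‖ + Kψ * ∫ s in (0:ℝ)..t, g s := by
    have hψs : ∀ s ∈ Icc 0 t, ‖ψ (X₁ s, Y₁ s) - ψ (X₂ s, Y₂ s)‖ ≤ Kψ * g s := fun s _ => by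
      rw [← dist_eq_norm]
      exact (hψ.dist_le_mul _ _).trans (mul_le_mul_of_nonneg_left (hdist s) Kψ.coe_nonneg)
    rw [h₁.eq_fst t htT, h₂.eq_fst t htT]
    exact norm_add_integral_add_sub_le ht.1
      ((h₁.continuousOn_integrand_fst hψ.continuous).intervalIntegrable_of_mem_Icc htT)
      ((h₂.continuousOn_integrand_fst hψ.continuous).intervalIntegrable_of_mem_Icc htT)
      hg_int hψs _ _ _
  have hY : |Y₁ t - Y₂ t| ≤ |(f₁ t).2 - (f₂ t).2| +
      (M * (γ * m ^ (γ - 1)) + B * Kφ) * ∫ s in (0:ℝ)..t, g s := by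
    rw [h₁.eq_snd t htT, h₂.eq_snd t htT]
    refine norm_add_integral_add_sub_le ht.1
      ((h₁.continuousOn_integrand_snd hφ.continuous hγ₀).intervalIntegrable_of_mem_Icc htT)
      ((h₂.continuousOn_integrand_snd hφ.continuous hγ₀).intervalIntegrable_of_mem_Icc htT)
      hg_int (fun s hs => ?_) _ _ _
    rw [Real.norm_eq_abs]
    have hsT : s ∈ Icc 0 T := ⟨hs.1, hs.2.trans htT.2⟩
    have hgs : |Y₁ s - Y₂ s| ≤ g s := le_add_of_nonneg_left (norm_nonneg _)
    have hY₁m : m ≤ Y₁ s := by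
      linarith [hY₂m s hsT, (abs_le.1 (hgs.trans (hclose s ⟨hs.1, hs.2.trans ht.2⟩))).1]
    have hφs : |φ (X₁ s, Y₁ s) - φ (X₂ s, Y₂ s)| ≤ Kφ * g s := by
      rw [← Real.dist_eq]
      exact (hφ.dist_le_mul _ _).trans (mul_le_mul_of_nonneg_left (hdist s) Kφ.coe_nonneg)
    calc _ ≤ M * (γ * m ^ (γ - 1)) * |Y₁ s - Y₂ s| + B * |φ (X₁ s, Y₁ s) - φ (X₂ s, Y₂ s)| :=
          abs_mul_rpow_sub_mul_rpow_le hγ₀ hγ₁ hm hY₁m (by linarith [hY₂m s hsT])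
            (hφM _) (hY₂B s hsT)
      _ ≤ M * (γ * m ^ (γ - 1)) * g s + B * (Kφ * g s) := by
          have hM : 0 ≤ M := (abs_nonneg _).trans (hφM 0)
          have hB : 0 ≤ B := (rpow_nonneg (by linarith [hY₂m s hsT]) _).trans (hY₂B s hsT)
          gcongr
      _ = _ := by ring
  have hf₁ : ‖(f₁ t).1 - (f₂ t).1‖ ≤ α := (norm_fst_le (f₁ t - f₂ t)).trans (hf t htT)
  have hf₂ : |(f₁ t).2 - (f₂ t).2| ≤ α := (norm_snd_le (f₁ t - f₂ t)).trans (hf t htT)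
  linarith

theorem gap_le {f₁ f₂ : ℝ → E × ℝ} {X₁ X₂ : ℝ → E} {Y₁ Y₂ : ℝ → ℝ}
    (h₁ : IsPerturbedSolution ψ φ γ T x y f₁ X₁ Y₁)
    (h₂ : IsPerturbedSolution ψ φ γ T x y f₂ X₂ Y₂)
    {Kψ Kφ : NNReal} (hψ : LipschitzWith Kψ ψ) (hφ : LipschitzWith Kφ φ)
    {M : ℝ} (hφM : ∀ p, |φ p| ≤ M) (hγ₀ : 0 ≤ γ) (hγ₁ : γ ≤ 1)
    {m B α : ℝ} (hm : 0 < m) (hY₂m : ∀ t ∈ Icc 0 T, 2 * m ≤ Y₂ t)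
    (hY₂B : ∀ t ∈ Icc 0 T, Y₂ t ^ γ ≤ B) (hf₀ : f₁ 0 = f₂ 0)
    (hf : ∀ t ∈ Icc 0 T, ‖f₁ t - f₂ t‖ ≤ α)
    (hα : 2 * α * exp ((Kψ + M * (γ * m ^ (γ - 1)) + B * Kφ) * T) < m) :
    ∀ t ∈ Icc 0 T, ‖X₁ t - X₂ t‖ + |Y₁ t - Y₂ t| ≤
      2 * α * exp ((Kψ + M * (γ * m ^ (γ - 1)) + B * Kφ) * T) := by
  intro t ht
  have h0T : (0:ℝ) ∈ Icc 0 T := ⟨le_rfl, ht.1.trans ht.2⟩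
  set L := (Kψ : ℝ) + M * (γ * m ^ (γ - 1)) + B * Kφ
  set g : ℝ → ℝ := fun s => ‖X₁ s - X₂ s‖ + |Y₁ s - Y₂ s|
  have hM : 0 ≤ M := (abs_nonneg _).trans (hφM 0)
  have hB : 0 ≤ B := (rpow_nonneg (by linarith [hY₂m 0 h0T]) _).trans (hY₂B 0 h0T)
  have hL : 0 ≤ L := by positivity
  have hα₀ : 0 ≤ α := (norm_nonneg _).trans (hf 0 h0T)
  have hg : ContinuousOn g (Icc 0 T) :=
    ((h₁.continuousOn_fst.sub h₂.continuousOn_fst).norm).add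
      (h₁.continuousOn_snd.sub h₂.continuousOn_snd).abs
  have hg₀ : g 0 = 0 := by
    simp [g, (h₁.apply_zero h0T.2).1, (h₁.apply_zero h0T.2).2, (h₂.apply_zero h0T.2).1,
      (h₂.apply_zero h0T.2).2, hf₀]
  have hbound : ∀ τ ∈ Icc 0 T, (∀ s ∈ Icc 0 τ, g s ≤ m) →
      ∀ s ∈ Icc 0 τ, g s ≤ 2 * α * exp (L * T) := by
    intro τ hτ hclose s hs
    calc g s ≤ 2 * α * exp (L * s) :=
          le_mul_exp_of_le_add_mul_integral hL (hg.mono (Icc_subset_Icc_right hτ.2))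
            (h₁.gap_le_add_integral h₂ hψ hφ hφM hγ₀ hγ₁ hm hY₂m hY₂B hf hτ.2 hclose) s hs
      _ ≤ 2 * α * exp (L * T) := by gcongr; exact hs.2.trans hτ.2
  have hclose : ∀ s ∈ Icc 0 T, g s ≤ m :=
    hg.forall_le_of_bootstrap (hg₀.trans_le hm.le) fun τ hτ hclose =>
      (hbound τ (Ico_subset_Icc_self hτ) hclose τ ⟨hτ.1, le_rfl⟩).trans_lt hα
  exact hbound T ⟨h0T.2, le_rfl⟩ hclose t ht

end IsPerturbedSolution

theorem stmt2_general (d : ℕ) (T : ℝ) (γ : ℝ) (hγ : γ ∈ Set.Ioo (0:ℝ) 1)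
    (c₁ : ℝ) (hc₁ : 0 < c₁)
    (ψ : EuclideanSpace ℝ (Fin d) × ℝ → EuclideanSpace ℝ (Fin d))
    (φ : EuclideanSpace ℝ (Fin d) × ℝ → ℝ)
    (hφb : ∃ M, ∀ p, |φ p| ≤ M)
    (hψl : ∃ K, LipschitzWith K ψ) (hφl : ∃ K, LipschitzWith K φ)
    (hφc : ∀ p, c₁ ≤ φ p) :
    ∀ δ > (0:ℝ), ∀ R ≥ (1:ℝ), ∃ α > (0:ℝ),
      ∀ x : EuclideanSpace ℝ (Fin d), ‖x‖ ≤ R →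
      ∀ y : ℝ, y ∈ Icc (1/R) R →
      -- the unperturbed solution started at (x, y)
      ∀ X₀ : ℝ → EuclideanSpace ℝ (Fin d), ∀ Y₀ : ℝ → ℝ,
        ContinuousOn X₀ (Icc 0 T) → ContinuousOn Y₀ (Icc 0 T) →
        (∀ t ∈ Icc (0:ℝ) T, 0 < Y₀ t) →
        (∀ t ∈ Icc (0:ℝ) T, X₀ t = x + ∫ s in (0:ℝ)..t, ψ (X₀ s, Y₀ s)) →
        (∀ t ∈ Icc (0:ℝ) T, Y₀ t = y + ∫ s in (0:ℝ)..t, φ (X₀ s, Y₀ s) * (Y₀ s) ^ γ) →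
      -- the small continuous forcing f = (f_X, f_Y)
      ∀ f : ℝ → EuclideanSpace ℝ (Fin d) × ℝ,
        ContinuousOn f (Icc 0 T) → f 0 = 0 →
        (∀ t ∈ Icc (0:ℝ) T, ‖f t‖ < α) →
      -- any solution of the perturbed equation
      ∀ Xf : ℝ → EuclideanSpace ℝ (Fin d), ∀ Yf : ℝ → ℝ,
        ContinuousOn Xf (Icc 0 T) → ContinuousOn Yf (Icc 0 T) →
        (∀ t ∈ Icc (0:ℝ) T,
          Xf t = x + (∫ s in (0:ℝ)..t, ψ (Xf s, Yf s)) + (f t).1) →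
        (∀ t ∈ Icc (0:ℝ) T,
          Yf t = y + (∫ s in (0:ℝ)..t, φ (Xf s, Yf s) * (Yf s) ^ γ) + (f t).2) →
      ∀ t ∈ Icc (0:ℝ) T, ‖Xf t - X₀ t‖ + |Yf t - Y₀ t| ≤ δ := by
  obtain ⟨M, hφM⟩ := hφb
  obtain ⟨Kψ, hψ⟩ := hψl
  obtain ⟨Kφ, hφ⟩ := hφl
  have hM : 0 ≤ M := (abs_nonneg _).trans (hφM 0)
  intro δ hδ R hR
  set m := 1 / (2 * R)
  set B := 1 + (R + M * T) * exp (M * T)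
  set L := (Kψ : ℝ) + M * (γ * m ^ (γ - 1)) + B * Kφ
  have hm : 0 < m := by positivity
  refine ⟨min δ m / (4 * exp (L * T)), by positivity, ?_⟩
  have h2α : 2 * (min δ m / (4 * exp (L * T))) * exp (L * T) = min δ m / 2 := by
    field_simp; ring
  intro x _ y hy X₀ Y₀ hX₀c hY₀c hY₀pos hX₀eq hY₀eq f _ hf₀ hfα Xf Yf hXfc hYfc hXfeq hYfeq
  have h₀ : IsPerturbedSolution ψ φ γ T x y 0 X₀ Y₀ :=
    ⟨hX₀c, hY₀c, by simpa using hX₀eq, by simpa using hY₀eq⟩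
  have hY₀ : ∀ t ∈ Icc 0 T, 0 ≤ Y₀ t := fun t ht => (hY₀pos t ht).le
  have hY₀m : ∀ t ∈ Icc 0 T, 2 * m ≤ Y₀ t := fun t ht => by
    have h2m : 2 * m = 1 / R := by simp only [m]; field_simp
    linarith [hy.1, h₀.le_snd (fun p => hc₁.le.trans (hφc p)) hY₀ t ht]
  have hY₀B : ∀ t ∈ Icc 0 T, Y₀ t ^ γ ≤ B := fun t ht => by
    have hT : 0 ≤ T := ht.1.trans ht.2
    calc Y₀ t ^ γ ≤ 1 + Y₀ t := rpow_le_one_add hγ.1.le hγ.2.le (hY₀ t ht)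
      _ ≤ 1 + (y + M * T) * exp (M * t) := by
          gcongr
          exact h₀.snd_le hφ.continuous hγ.1.le hγ.2.le hM
            (fun p => (le_abs_self _).trans (hφM p)) hY₀ t ht
      _ ≤ 1 + (R + M * T) * exp (M * T) := by gcongr; exacts [hy.2, ht.2]
  have hgap := IsPerturbedSolution.gap_le ⟨hXfc, hYfc, hXfeq, hYfeq⟩ h₀ hψ hφ hφM hγ.1.le hγ.2.le hm
    hY₀m hY₀B (by simpa using hf₀) (fun t ht => by simpa using (hfα t ht).le)
    (by rw [h2α]; linarith [min_le_right δ m])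
  intro t ht
  linarith [hgap t ht, min_le_left δ m]

/-- Deterministic stability lemma: any solution of the integral system perturbed by a
uniformly small continuous forcing `f` with `f(0) = 0`, started at `(x, y)` with
`|x| ≤ R` and `y ∈ [1/R, R]`, stays uniformly `δ`-close on `[0,T]` to the (unique)
unperturbed solution started at the same point. -/
theorem stmt2 (d : ℕ) (T : ℝ) (hT : 0 < T) (γ : ℝ) (hγ : γ ∈ Set.Ioo (0:ℝ) 1)
    (c₁ : ℝ) (hc₁ : 0 < c₁)
    (ψ : EuclideanSpace ℝ (Fin d) × ℝ → EuclideanSpace ℝ (Fin d))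
    (φ : EuclideanSpace ℝ (Fin d) × ℝ → ℝ)
    (hψb : ∃ M, ∀ p, ‖ψ p‖ ≤ M) (hφb : ∃ M, ∀ p, |φ p| ≤ M)
    (hψl : ∃ K, LipschitzWith K ψ) (hφl : ∃ K, LipschitzWith K φ)
    (hφc : ∀ p, c₁ ≤ φ p) :
    ∀ δ > (0:ℝ), ∀ R ≥ (1:ℝ), ∃ α > (0:ℝ),
      ∀ x : EuclideanSpace ℝ (Fin d), ‖x‖ ≤ R →
      ∀ y : ℝ, y ∈ Icc (1/R) R →
      -- the unperturbed solution started at (x, y)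
      ∀ X₀ : ℝ → EuclideanSpace ℝ (Fin d), ∀ Y₀ : ℝ → ℝ,
        ContinuousOn X₀ (Icc 0 T) → ContinuousOn Y₀ (Icc 0 T) →
        (∀ t ∈ Icc (0:ℝ) T, 0 < Y₀ t) →
        (∀ t ∈ Icc (0:ℝ) T, X₀ t = x + ∫ s in (0:ℝ)..t, ψ (X₀ s, Y₀ s)) →
        (∀ t ∈ Icc (0:ℝ) T, Y₀ t = y + ∫ s in (0:ℝ)..t, φ (X₀ s, Y₀ s) * (Y₀ s) ^ γ) →
      -- the small continuous forcing f = (f_X, f_Y)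
      ∀ f : ℝ → EuclideanSpace ℝ (Fin d) × ℝ,
        ContinuousOn f (Icc 0 T) → f 0 = 0 →
        (∀ t ∈ Icc (0:ℝ) T, ‖f t‖ < α) →
      -- any solution of the perturbed equation
      ∀ Xf : ℝ → EuclideanSpace ℝ (Fin d), ∀ Yf : ℝ → ℝ,
        ContinuousOn Xf (Icc 0 T) → ContinuousOn Yf (Icc 0 T) →
        (∀ t ∈ Icc (0:ℝ) T,
          Xf t = x + (∫ s in (0:ℝ)..t, ψ (Xf s, Yf s)) + (f t).1) →
        (∀ t ∈ Icc (0:ℝ) T,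
          Yf t = y + (∫ s in (0:ℝ)..t, φ (Xf s, Yf s) * (Yf s) ^ γ) + (f t).2) →
      ∀ t ∈ Icc (0:ℝ) T, ‖Xf t - X₀ t‖ + |Yf t - Y₀ t| ≤ δ :=
  stmt2_general d T γ hγ c₁ hc₁ ψ φ hφb hψl hφl hφc
end

section
/- For every A > 0 and every γ ∈ (0,1), lim_{u→+∞} u^{−(1−γ)/(γ+1)} ∫₀ᵘ exp(−2At/(γ+1)) (∫₀ᵗ exp(2As/(γ+1)) s^{−γ/(γ+1)} ds) t^{−γ/(γ+1)} dt = (γ+1)² / (2A(1−γ)). -/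
/-!
Both integrals are evaluated by the integral form of L'Hôpital's rule: if `f ~ g` at `+∞`, with
`g` eventually nonnegative and `∫ₐᵘ g → ∞`, then `∫ₐᵘ f ~ ∫ₐᵘ g`. Since the derivative of
`α⁻¹ e^{αt} t^β` is `e^{αt} t^β (1 + β/(αt)) ~ e^{αt} t^β`, the inner integral is
`~ α⁻¹ e^{αt} t^β`; hence the outer integrand is `~ α⁻¹ t^{2β}`, whose integral is
`u^{2β+1} / (α(2β+1))` when `β > -1/2`. The theorem is the case `α = 2A/(γ+1)`, `β = -γ/(γ+1)`.
-/

open MeasureTheory Filter Real intervalIntegral Asymptotics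

theorem Asymptotics.IsLittleO.intervalIntegral_atTop {E : Type*} [NormedAddCommGroup E]
    [NormedSpace ℝ E] {f : ℝ → E} {g : ℝ → ℝ} {a : ℝ} (h : f =o[atTop] g)
    (hf : ∀ b ≥ a, IntervalIntegrable f volume a b) (hg : ∀ b ≥ a, IntervalIntegrable g volume a b)
    (hg0 : ∀ᶠ t in atTop, 0 ≤ g t) (hG : Tendsto (fun u => ∫ t in a..u, g t) atTop atTop) :
    (fun u => ∫ t in a..u, f t) =o[atTop] fun u => ∫ t in a..u, g t := by
  refine isLittleO_iff.2 fun ε hε => ?_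
  obtain ⟨T, hT⟩ : ∃ T, ∀ t ≥ T, a ≤ t ∧ ‖f t‖ ≤ ε / 2 * g t := by
    refine eventually_atTop.1 ?_
    filter_upwards [isLittleO_iff.1 h (half_pos hε), hg0, eventually_ge_atTop a]
      with t hfg hgt hat
    exact ⟨hat, by rwa [Real.norm_of_nonneg hgt] at hfg⟩
  have haT := (hT T le_rfl).1
  have hinit : (fun _ : ℝ => ‖∫ t in a..T, f t‖ + ε / 2 * |∫ t in a..T, g t|)
      =o[atTop] fun u => ∫ t in a..u, g t :=
    isLittleO_const_left.2 (Or.inr (tendsto_norm_atTop_atTop.comp hG))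
  filter_upwards [isLittleO_iff.1 hinit (half_pos hε), eventually_ge_atTop T,
    hG.eventually_ge_atTop 0] with u hu hTu hGu
  have hau := haT.trans hTu
  rw [Real.norm_of_nonneg (by positivity)] at hu
  rw [Real.norm_of_nonneg hGu] at hu ⊢
  have htail : ‖∫ t in T..u, f t‖ ≤ ε / 2 * ((∫ t in a..u, g t) - ∫ t in a..T, g t) := by
    rw [integral_interval_sub_left (hg u hau) (hg T haT), ← intervalIntegral.integral_const_mul]
    exact norm_integral_le_of_norm_le hTu (ae_of_all _ fun t ht => (hT t ht.1.le).2)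
      (((hg T haT).symm.trans (hg u hau)).const_mul _)
  calc ‖∫ t in a..u, f t‖ = ‖(∫ t in a..T, f t) + ∫ t in T..u, f t‖ := by
        rw [integral_add_adjacent_intervals (hf T haT) ((hf T haT).symm.trans (hf u hau))]
    _ ≤ ‖∫ t in a..T, f t‖ + ‖∫ t in T..u, f t‖ := norm_add_le _ _
    _ ≤ ε * ∫ t in a..u, g t := by
        nlinarith [neg_abs_le (∫ t in a..T, g t)]

theorem Asymptotics.IsEquivalent.intervalIntegral_atTop {f g : ℝ → ℝ} {a : ℝ}
    (h : f ~[atTop] g) (hf : ∀ b ≥ a, IntervalIntegrable f volume a b)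
    (hg : ∀ b ≥ a, IntervalIntegrable g volume a b) (hg0 : ∀ᶠ t in atTop, 0 ≤ g t)
    (hG : Tendsto (fun u => ∫ t in a..u, g t) atTop atTop) :
    (fun u => ∫ t in a..u, f t) ~[atTop] fun u => ∫ t in a..u, g t := by
  refine IsLittleO.isEquivalent ?_
  refine (h.isLittleO.intervalIntegral_atTop (fun b hb => (hf b hb).sub (hg b hb)) hg hg0
    hG).congr' ?_ EventuallyEq.rfl
  filter_upwards [eventually_ge_atTop a] with u hu
  exact integral_sub (hf u hu) (hg u hu)

theorem hasDerivAt_inv_mul_exp_mul_rpow {α β t : ℝ} (hα : α ≠ 0) (ht : 0 < t) :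
    HasDerivAt (fun x => α⁻¹ * (exp (α * x) * x ^ β))
      (exp (α * t) * t ^ β * (1 + β / (α * t))) t := by
  have hexp : HasDerivAt (fun x => exp (α * x)) (exp (α * t) * α) t := by
    simpa using ((hasDerivAt_id t).const_mul α).exp
  refine ((hexp.mul (hasDerivAt_rpow_const (p := β) (Or.inl ht.ne'))).const_mul α⁻¹).congr_deriv
    ?_
  rw [rpow_sub_one ht.ne']
  field_simp

theorem tendsto_inv_mul_exp_mul_rpow_atTop {α : ℝ} (β : ℝ) (hα : 0 < α) :
    Tendsto (fun t => α⁻¹ * (exp (α * t) * t ^ β)) atTop atTop := by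
  refine ((tendsto_exp_mul_div_rpow_atTop (-β) α hα).const_mul_atTop (inv_pos.2 hα)).congr' ?_
  filter_upwards [eventually_gt_atTop 0] with t ht
  rw [rpow_neg ht.le, div_inv_eq_mul]

theorem isEquivalent_integral_exp_mul_rpow {α β : ℝ} (hα : 0 < α) (hβ : -1 < β) :
    (fun t => ∫ s in (0:ℝ)..t, exp (α * s) * s ^ β) ~[atTop]
      fun t => α⁻¹ * (exp (α * t) * t ^ β) := by
  set f := fun s => exp (α * s) * s ^ β
  set G := fun t => α⁻¹ * (exp (α * t) * t ^ β)
  set G' := fun t => exp (α * t) * t ^ β * (1 + β / (α * t))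
  have hf : ∀ a b, IntervalIntegrable f volume a b := fun a b =>
    (intervalIntegrable_rpow' hβ).continuousOn_mul (by fun_prop)
  have hGtop : Tendsto G atTop atTop := tendsto_inv_mul_exp_mul_rpow_atTop β hα
  have hFTC : ∀ b ≥ 1, IntervalIntegrable G' volume 1 b ∧ ∫ t in 1..b, G' t = G b - G 1 := by
    intro b hb
    have hpos : ∀ t ∈ Set.uIcc 1 b, 0 < t := fun t ht =>
      zero_lt_one.trans_le (Set.uIcc_of_le hb ▸ ht).1
    have hint : IntervalIntegrable G' volume 1 b := by
      refine ContinuousOn.intervalIntegrable fun t ht => ContinuousAt.continuousWithinAt ?_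
      have := hpos t ht
      simp only [G']
      fun_prop (disch := first | positivity | exact Or.inl (by positivity))
    exact ⟨hint, integral_eq_sub_of_hasDerivAt
      (fun t ht => hasDerivAt_inv_mul_exp_mul_rpow hα.ne' (hpos t ht)) hint⟩
  have hfG' : f ~[atTop] G' := by
    have hcorr : (fun t => 1 + β / (α * t)) ~[atTop] Function.const ℝ 1 :=
      (isEquivalent_const_iff_tendsto one_ne_zero).2 <| by
        simpa using (tendsto_const_nhds.div_atTop (tendsto_id.const_mul_atTop hα)).const_add 1
    have := (IsEquivalent.refl (u := f)).mul hcorr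
    rw [Function.const_one, mul_one] at this
    exact this.symm
  have htail : (fun u => ∫ t in (1:ℝ)..u, f t) ~[atTop] fun u => G u - G 1 := by
    have hG' : (fun u => ∫ t in (1:ℝ)..u, G' t) =ᶠ[atTop] fun u => G u - G 1 := by
      filter_upwards [eventually_ge_atTop 1] with u hu using (hFTC u hu).2
    refine (hfG'.intervalIntegral_atTop (fun b _ => hf 1 b) (fun b hb => (hFTC b hb).1)
      (hfG'.symm.eventually_nonneg ?_) ?_).trans_eventuallyEq hG'
    · filter_upwards [eventually_gt_atTop 0] with t ht using by positivity
    · exact (tendsto_atTop_add_const_right _ _ hGtop).congr' hG'.symm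
  have hsplit : (fun u => (∫ t in (0:ℝ)..1, f t) + ∫ t in (1:ℝ)..u, f t) =
      fun u => ∫ t in (0:ℝ)..u, f t :=
    funext fun u => integral_add_adjacent_intervals (hf 0 1) (hf 1 u)
  have hGnorm : Tendsto (norm ∘ G) atTop atTop := tendsto_norm_atTop_atTop.comp hGtop
  have hGshift : (fun u => G u - G 1) ~[atTop] G :=
    IsEquivalent.refl.sub_isLittleO (isLittleO_const_left.2 (Or.inr hGnorm))
  rw [← hsplit]
  exact (htail.trans hGshift).const_add_of_norm_tendsto_atTop hGnorm

theorem isEquivalent_integral_exp_neg_mul_integral_exp_mul_rpow {α β : ℝ} (hα : 0 < α)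
    (hβ : -(1 / 2) < β) :
    (fun u => ∫ t in (0:ℝ)..u, exp (-(α * t)) * (∫ s in (0:ℝ)..t, exp (α * s) * s ^ β) * t ^ β)
      ~[atTop] fun u => u ^ (2 * β + 1) / (α * (2 * β + 1)) := by
  have hβ1 : -1 < β := by linarith
  have h2β : -1 < 2 * β := by linarith
  have hIcont : Continuous fun t => ∫ s in (0:ℝ)..t, exp (α * s) * s ^ β :=
    continuous_primitive (fun _ _ => (intervalIntegrable_rpow' hβ1).continuousOn_mul
      (by fun_prop)) 0
  have hF : (fun t => exp (-(α * t)) * (∫ s in (0:ℝ)..t, exp (α * s) * s ^ β) * t ^ β)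
      ~[atTop] fun t => α⁻¹ * t ^ (2 * β) := by
    refine ((IsEquivalent.refl.mul (isEquivalent_integral_exp_mul_rpow hα hβ1)).mul
      IsEquivalent.refl).trans_eventuallyEq ?_
    filter_upwards [eventually_gt_atTop 0] with t ht
    simp only [Pi.mul_apply]
    rw [two_mul, rpow_add ht, exp_neg]
    field_simp
  have hg : (fun u => ∫ t in (0:ℝ)..u, α⁻¹ * t ^ (2 * β)) =
      fun u => u ^ (2 * β + 1) / (α * (2 * β + 1)) := by
    ext u
    rw [intervalIntegral.integral_const_mul, integral_rpow (Or.inl h2β),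
      zero_rpow (by linarith), sub_zero]
    field_simp
  rw [← hg]
  refine hF.intervalIntegral_atTop
    (fun _ _ => (intervalIntegrable_rpow' hβ1).continuousOn_mul (by fun_prop))
    (fun _ _ => (intervalIntegrable_rpow' h2β).const_mul _) ?_ ?_
  · filter_upwards [eventually_gt_atTop 0] with t ht using by positivity
  · rw [hg]
    exact (tendsto_rpow_atTop (by linarith)).atTop_div_const (by nlinarith)

theorem tendsto_rpow_neg_mul_integral_exp_neg_mul_integral_exp_mul_rpow {α β : ℝ} (hα : 0 < α)
    (hβ : -(1 / 2) < β) :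
    Tendsto (fun u => u ^ (-(2 * β + 1)) * ∫ t in (0:ℝ)..u,
      exp (-(α * t)) * (∫ s in (0:ℝ)..t, exp (α * s) * s ^ β) * t ^ β)
      atTop (nhds (1 / (α * (2 * β + 1)))) := by
  refine ((IsEquivalent.refl (u := fun u : ℝ => u ^ (-(2 * β + 1)))).mul
    (isEquivalent_integral_exp_neg_mul_integral_exp_mul_rpow hα hβ)).tendsto_nhds_iff.2 ?_
  refine tendsto_const_nhds.congr' ?_
  filter_upwards [eventually_gt_atTop 0] with u hu
  have : 0 < 2 * β + 1 := by linarith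
  simp only [Pi.mul_apply]
  rw [rpow_neg hu.le]
  field_simp

/-- Asymptotics of the iterated integral
`∫₀ᵘ e^{-2At/(γ+1)} (∫₀ᵗ e^{2As/(γ+1)} s^{-γ/(γ+1)} ds) t^{-γ/(γ+1)} dt
  ∼ (γ+1)²/(2A(1-γ)) · u^{(1-γ)/(γ+1)}` as `u → +∞`. -/
theorem stmt4 (A γ : ℝ) (hA : 0 < A) (hγ : γ ∈ Set.Ioo (0:ℝ) 1) :
    Tendsto (fun u : ℝ => u ^ (-((1 - γ)/(γ+1))) *
      ∫ t in (0:ℝ)..u, Real.exp (-2*A*t/(γ+1)) *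
        (∫ s in (0:ℝ)..t, Real.exp (2*A*s/(γ+1)) * s ^ (-γ/(γ+1))) * t ^ (-γ/(γ+1)))
      atTop (nhds ((γ+1)^2 / (2*A*(1-γ)))) := by
  obtain ⟨hγ0, hγ1⟩ := hγ
  have hγ1' : 0 < γ + 1 := by linarith
  have hβ : -(1 / 2) < -γ / (γ + 1) := by rw [lt_div_iff₀ hγ1']; linarith
  have key := tendsto_rpow_neg_mul_integral_exp_neg_mul_integral_exp_mul_rpow
    (by positivity : 0 < 2 * A / (γ + 1)) hβ
  have hexp : 2 * (-γ / (γ + 1)) + 1 = (1 - γ) / (γ + 1) := by field_simp; ring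
  have hlim : 1 / (2 * A / (γ + 1) * ((1 - γ) / (γ + 1))) = (γ + 1) ^ 2 / (2 * A * (1 - γ)) := by
    field_simp
  have hpos_arg : ∀ x, 2 * A * x / (γ + 1) = 2 * A / (γ + 1) * x := fun x => by ring
  have hneg_arg : ∀ x, -2 * A * x / (γ + 1) = -(2 * A / (γ + 1) * x) := fun x => by ring
  simp only [hpos_arg, hneg_arg, ← hexp, ← hlim]
  exact key
end

section
/- For A > 0, γ ∈ (0,1) and ε > 0, define v_ε : ℝ → ℝ by v_ε(x) = ∫₀^{|x|} exp(−2A y^{γ+1}/((γ+1)ε²)) (∫₀^y (2/ε²) exp(2A z^{γ+1}/((γ+1)ε²)) dz) dy. Then for every fixed x ≠ 0, lim_{ε→0⁺} v_ε(x) = |x|^{1−γ} / (A(1−γ)). -/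
/-!
Write `p = γ + 1` and `t = 2 / ε²`. Then `v_ε(x) = ∫₀^{|x|} v_ε'(y) dy` with
`v_ε'(y) = t ∫₀^y exp(-(A t / p)(y^p - z^p)) dz`, a Laplace-type integral concentrated at `z = y`.
Comparing `y^p - z^p` with its linearisation `p y^{p-1} (y - z)` (convexity of `z ↦ z^p`) squeezes
`v_ε'(y)` between quantities tending to `y^{1-p} / A` as `t → ∞`; the same comparison gives the
bound `v_ε'(y) ≤ C y^{1-p}`, integrable near `0` because `p < 2`, so dominated convergence applies.
-/

open MeasureTheory Filter Set Real Topology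

lemma rpow_add_mul_sub_le_rpow {p y z : ℝ} (hp : 1 ≤ p) (hy : 0 < y) (hz : 0 ≤ z) :
    y ^ p + p * y ^ (p - 1) * (z - y) ≤ z ^ p := by
  have hbern := one_add_mul_self_le_rpow_one_add (s := z / y - 1)
    (by linarith [div_nonneg hz hy.le]) hp
  rw [add_sub_cancel, div_rpow hz hy.le, le_div_iff₀ (rpow_pos_of_pos hy p)] at hbern
  have hyp : y ^ p = y ^ (p - 1) * y := by rw [← rpow_add_one hy.ne', sub_add_cancel]
  calc y ^ p + p * y ^ (p - 1) * (z - y) = (1 + p * (z / y - 1)) * y ^ p := by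
        rw [hyp]; field_simp
    _ ≤ z ^ p := hbern

lemma integral_exp_neg_mul_sub (m a b : ℝ) (hm : m ≠ 0) :
    ∫ z in a..b, exp (-m * (b - z)) = (1 - exp (-m * (b - a))) / m := by
  rw [intervalIntegral.integral_comp_sub_left (fun u => exp (-m * u)),
    intervalIntegral.integral_comp_mul_left (fun u => exp u) (neg_ne_zero.2 hm), integral_exp]
  simp only [sub_self, mul_zero, exp_zero, smul_eq_mul]
  field_simp
  ring

lemma integral_exp_neg_mul_sub_le {m a b : ℝ} (hm : 0 < m) :
    ∫ z in a..b, exp (-m * (b - z)) ≤ 1 / m := by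
  rw [integral_exp_neg_mul_sub m a b hm.ne']
  gcongr
  linarith [exp_pos (-m * (b - a))]

lemma continuous_exp_mul_rpow_sub {p : ℝ} (hp : 0 ≤ p) (c : ℝ) :
    Continuous fun q : ℝ × ℝ => exp (c * (q.1 ^ p - q.2 ^ p)) := by
  have := continuous_rpow_const hp
  fun_prop

lemma intervalIntegrable_exp_mul_rpow_sub {p y : ℝ} (hp : 0 ≤ p) (c a b : ℝ) :
    IntervalIntegrable (fun z => exp (c * (y ^ p - z ^ p))) volume a b :=
  ((continuous_exp_mul_rpow_sub hp c).comp
    (continuous_const.prodMk continuous_id)).intervalIntegrable a b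

lemma le_integral_exp_neg_mul_rpow_sub {c p y : ℝ} (hc : 0 < c) (hp : 1 ≤ p) (hy : 0 < y) :
    (1 - exp (-(c * p * y ^ p))) / (c * p * y ^ (p - 1))
      ≤ ∫ z in (0:ℝ)..y, exp (-c * (y ^ p - z ^ p)) := by
  set m := c * p * y ^ (p - 1)
  have hm : 0 < m := mul_pos (mul_pos hc (by linarith)) (rpow_pos_of_pos hy _)
  have hbound : ∀ z ∈ Icc 0 y, exp (-m * (y - z)) ≤ exp (-c * (y ^ p - z ^ p)) := by
    intro z hz
    have htan := rpow_add_mul_sub_le_rpow hp hy hz.1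
    rw [exp_le_exp, neg_mul, neg_mul, neg_le_neg_iff]
    calc c * (y ^ p - z ^ p) ≤ c * (p * y ^ (p - 1) * (y - z)) := by gcongr; linarith
      _ = m * (y - z) := by ring
  have hmy : m * (y - 0) = c * p * y ^ p := by
    rw [sub_zero, mul_assoc, ← rpow_add_one hy.ne', sub_add_cancel]
  rw [show -(c * p * y ^ p) = -m * (y - 0) by rw [neg_mul, hmy],
    ← integral_exp_neg_mul_sub m 0 y hm.ne']
  refine intervalIntegral.integral_mono_on hy.le ?_
    (intervalIntegrable_exp_mul_rpow_sub (by linarith) _ 0 y) hbound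
  exact (by fun_prop : Continuous fun z => exp (-m * (y - z))).intervalIntegrable 0 y

lemma integral_exp_neg_mul_rpow_sub_le_away {c p θ y : ℝ} (hc : 0 ≤ c) (hp : 0 ≤ p) (hθ : 0 ≤ θ)
    (hy : 0 ≤ y) :
    ∫ z in (0:ℝ)..θ * y, exp (-c * (y ^ p - z ^ p)) ≤ θ * y * exp (-c * ((1 - θ ^ p) * y ^ p)) := by
  have hbound : ∀ z ∈ Icc 0 (θ * y),
      exp (-c * (y ^ p - z ^ p)) ≤ exp (-c * ((1 - θ ^ p) * y ^ p)) := by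
    intro z hz
    have hzp : z ^ p ≤ θ ^ p * y ^ p := by
      rw [← mul_rpow hθ hy]
      exact rpow_le_rpow hz.1 hz.2 hp
    rw [exp_le_exp]
    exact mul_le_mul_of_nonpos_left (by linarith) (neg_nonpos.2 hc)
  simpa using intervalIntegral.integral_mono_on (by positivity)
    (intervalIntegrable_exp_mul_rpow_sub hp _ _ _) intervalIntegrable_const hbound

lemma integral_exp_neg_mul_rpow_sub_le_near {c p a y : ℝ} (hc : 0 < c) (hp : 1 ≤ p) (ha : 0 < a)
    (hay : a ≤ y) :
    ∫ z in a..y, exp (-c * (y ^ p - z ^ p)) ≤ 1 / (c * p * a ^ (p - 1)) := by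
  set m := c * p * a ^ (p - 1)
  have hm : 0 < m := mul_pos (mul_pos hc (by linarith)) (rpow_pos_of_pos ha _)
  have hbound : ∀ z ∈ Icc a y, exp (-c * (y ^ p - z ^ p)) ≤ exp (-m * (y - z)) := by
    intro z hz
    have htan := rpow_add_mul_sub_le_rpow hp (ha.trans_le hz.1) (ha.le.trans hay)
    have hpow : a ^ (p - 1) ≤ z ^ (p - 1) := rpow_le_rpow ha.le hz.1 (by linarith)
    rw [exp_le_exp, neg_mul, neg_mul, neg_le_neg_iff]
    calc m * (y - z) = c * (p * a ^ (p - 1) * (y - z)) := by ring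
      _ ≤ c * (y ^ p - z ^ p) := by
        gcongr
        nlinarith [mul_le_mul_of_nonneg_right hpow (sub_nonneg.2 hz.2)]
  refine (intervalIntegral.integral_mono_on hay (intervalIntegrable_exp_mul_rpow_sub
    (by linarith) _ a y) ?_ hbound).trans (integral_exp_neg_mul_sub_le hm)
  exact (by fun_prop : Continuous fun z => exp (-m * (y - z))).intervalIntegrable a y

noncomputable def lyapunovDeriv (A p t y : ℝ) : ℝ :=
  t * ∫ z in (0:ℝ)..y, exp (-(A * t / p) * (y ^ p - z ^ p))

lemma lyapunovDeriv_two_div_sq (A p ε y : ℝ) :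
    lyapunovDeriv A p (2 / ε ^ 2) y = exp (-2 * A * y ^ p / (p * ε ^ 2)) *
      ∫ z in (0:ℝ)..y, (2 / ε ^ 2) * exp (2 * A * z ^ p / (p * ε ^ 2)) := by
  rw [lyapunovDeriv, ← intervalIntegral.integral_const_mul, ← intervalIntegral.integral_const_mul]
  congr 1 with z
  rw [mul_left_comm, ← exp_add]
  ring_nf

section
variable {A p t y : ℝ}

lemma continuous_lyapunovDeriv (hp : 0 ≤ p) : Continuous (lyapunovDeriv A p t) :=
  continuous_const.mul <|
    (intervalIntegral.continuous_parametric_primitive_of_continuous (a₀ := 0) (μ := volume)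
      (f := fun y z => exp (-(A * t / p) * (y ^ p - z ^ p)))
      (continuous_exp_mul_rpow_sub hp _)).comp (continuous_id.prodMk continuous_id)

lemma lyapunovDeriv_nonneg (ht : 0 ≤ t) (hy : 0 ≤ y) : 0 ≤ lyapunovDeriv A p t y :=
  mul_nonneg ht <| intervalIntegral.integral_nonneg hy fun _ _ => (exp_pos _).le

lemma le_lyapunovDeriv (hA : 0 < A) (hp : 1 ≤ p) (ht : 0 < t) (hy : 0 < y) :
    (1 - exp (-(A * t * y ^ p))) * y ^ (1 - p) / A ≤ lyapunovDeriv A p t y := by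
  have hp0 : 0 < p := by linarith
  have hcp : A * t / p * p = A * t := div_mul_cancel₀ _ hp0.ne'
  have hlower := le_integral_exp_neg_mul_rpow_sub (by positivity : 0 < A * t / p) hp hy
  rw [hcp] at hlower
  calc (1 - exp (-(A * t * y ^ p))) * y ^ (1 - p) / A
      = t * ((1 - exp (-(A * t * y ^ p))) / (A * t * y ^ (p - 1))) := by
        rw [show 1 - p = -(p - 1) by ring, rpow_neg hy.le]
        field_simp
    _ ≤ lyapunovDeriv A p t y := mul_le_mul_of_nonneg_left hlower ht.le

lemma lyapunovDeriv_le (hA : 0 < A) (hp : 1 ≤ p) (ht : 0 < t) (hy : 0 < y) {θ : ℝ}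
    (hθ : 0 < θ) (hθ1 : θ ≤ 1) :
    lyapunovDeriv A p t y
      ≤ t * θ * y * exp (-(A * t / p) * ((1 - θ ^ p) * y ^ p)) + (θ * y) ^ (1 - p) / A := by
  have hp0 : 0 < p := by linarith
  have hθy : 0 < θ * y := by positivity
  have hint := intervalIntegrable_exp_mul_rpow_sub (y := y) hp0.le (-(A * t / p))
  have hlayer : t * (1 / (A * t / p * p * (θ * y) ^ (p - 1))) = (θ * y) ^ (1 - p) / A := by
    rw [show 1 - p = -(p - 1) by ring, rpow_neg hθy.le]
    field_simp
  rw [lyapunovDeriv, ← intervalIntegral.integral_add_adjacent_intervals (hint 0 (θ * y))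
    (hint (θ * y) y), mul_add, ← hlayer, mul_assoc t, mul_assoc t]
  gcongr
  · exact integral_exp_neg_mul_rpow_sub_le_away (by positivity) hp0.le hθ.le hy.le
  · exact integral_exp_neg_mul_rpow_sub_le_near (by positivity) hp hθy
      (mul_le_of_le_one_left hy.le hθ1)

lemma lyapunovDeriv_le_rpow (hA : 0 < A) (hp : 1 ≤ p) (ht : 0 < t) (hy : 0 < y) :
    lyapunovDeriv A p t y ≤ (p + 2 ^ (p - 1)) / A * y ^ (1 - p) := by
  have hp0 : 0 < p := by linarith
  set u := A * t * y ^ p / (2 * p)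
  have hhalf : (1 / 2 : ℝ) ^ p ≤ 1 / 2 := by
    simpa using rpow_le_rpow_of_exponent_ge (by norm_num : (0:ℝ) < 1 / 2) (by norm_num) hp
  have hexp : exp (-(A * t / p) * ((1 - (1 / 2) ^ p) * y ^ p)) ≤ exp (-u) := by
    rw [exp_le_exp, neg_mul, neg_le_neg_iff]
    calc u = A * t / p * (1 / 2 * y ^ p) := by simp only [u]; field_simp
      _ ≤ A * t / p * ((1 - (1 / 2) ^ p) * y ^ p) := by gcongr; linarith
  have hyy : y ^ (1 - p) * y ^ p = y := by rw [← rpow_add hy]; simp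
  have hbulk : t * (1 / 2) * y * exp (-(A * t / p) * ((1 - (1 / 2) ^ p) * y ^ p))
      ≤ p / A * y ^ (1 - p) :=
    calc t * (1 / 2) * y * exp (-(A * t / p) * ((1 - (1 / 2) ^ p) * y ^ p))
        ≤ t * (1 / 2) * y * exp (-u) := by gcongr
      _ = p / A * y ^ (1 - p) * (u * exp (-u)) := by
          conv_lhs => rw [← hyy]
          simp only [u]
          field_simp
      _ ≤ p / A * y ^ (1 - p) * 1 := by
          gcongr
          exact (mul_exp_neg_le_exp_neg_one u).trans (exp_le_one_iff.2 (by norm_num))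
      _ = p / A * y ^ (1 - p) := mul_one _
  have hlayer : (1 / 2 * y) ^ (1 - p) / A = 2 ^ (p - 1) / A * y ^ (1 - p) := by
    rw [mul_rpow (by norm_num) hy.le, one_div, inv_rpow (by norm_num), ← rpow_neg (by norm_num),
      neg_sub]
    ring
  calc lyapunovDeriv A p t y
      ≤ t * (1 / 2) * y * exp (-(A * t / p) * ((1 - (1 / 2) ^ p) * y ^ p))
        + (1 / 2 * y) ^ (1 - p) / A := lyapunovDeriv_le hA hp ht hy (by norm_num) (by norm_num)
    _ ≤ p / A * y ^ (1 - p) + 2 ^ (p - 1) / A * y ^ (1 - p) := by rw [hlayer]; gcongr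
    _ = (p + 2 ^ (p - 1)) / A * y ^ (1 - p) := by ring

lemma tendsto_lyapunovDeriv_atTop (hA : 0 < A) (hp : 1 ≤ p) (hy : 0 < y) :
    Tendsto (fun t => lyapunovDeriv A p t y) atTop (𝓝 (y ^ (1 - p) / A)) := by
  rw [tendsto_order]
  constructor
  · intro b hb
    have hlow : Tendsto (fun t => (1 - exp (-(A * t * y ^ p))) * y ^ (1 - p) / A) atTop
        (𝓝 (y ^ (1 - p) / A)) := by
      have hexp : Tendsto (fun t => exp (-(A * t * y ^ p))) atTop (𝓝 0) := by
        refine tendsto_exp_neg_atTop_nhds_zero.comp ?_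
        exact (tendsto_id.atTop_mul_const (by positivity : 0 < A * y ^ p)).congr
          fun t => by simp only [id]; ring
      simpa using
        ((tendsto_const_nhds (x := (1:ℝ)) |>.sub hexp).mul_const (y ^ (1 - p))).div_const A
    filter_upwards [hlow.eventually (lt_mem_nhds hb), eventually_gt_atTop 0] with t hbt ht
    exact hbt.trans_le (le_lyapunovDeriv hA hp ht hy)
  · intro b hb
    -- Take `θ < 1` so close to `1` that the boundary-layer term of `lyapunovDeriv_le` is below `b`;
    -- the remaining term decays exponentially in `t`.
    obtain ⟨θ, hθb, hθ0, hθ1⟩ : ∃ θ, (θ * y) ^ (1 - p) / A < b ∧ 0 < θ ∧ θ < 1 := by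
      have hcont : ContinuousAt (fun θ : ℝ => (θ * y) ^ (1 - p) / A) 1 :=
        ((continuousAt_id.mul continuousAt_const).rpow_const
          (Or.inl (by simpa using hy.ne'))).div_const A
      exact ((hcont.eventually (gt_mem_nhds (by simpa using hb))).filter_mono
        nhdsWithin_le_nhds |>.and (Ioo_mem_nhdsLT zero_lt_one)).exists
    have hθp : θ ^ p < 1 := rpow_lt_one hθ0.le hθ1 (by linarith)
    have hboundary : Tendsto (fun t => t * θ * y * exp (-(A * t / p) * ((1 - θ ^ p) * y ^ p)))
        atTop (𝓝 0) := by
      have hk : 0 < A / p * ((1 - θ ^ p) * y ^ p) :=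
        mul_pos (div_pos hA (by linarith)) (mul_pos (by linarith) (by positivity))
      have hdecay := (tendsto_rpow_mul_exp_neg_mul_atTop_nhds_zero 1 _ hk).const_mul (θ * y)
      rw [mul_zero] at hdecay
      exact hdecay.congr fun t => by rw [rpow_one]; ring_nf
    filter_upwards [(hboundary.add_const _).eventually (gt_mem_nhds (by simpa using hθb)),
      eventually_gt_atTop 0] with t hbt ht
    exact (lyapunovDeriv_le hA hp ht hy hθ0 hθ1.le).trans_lt hbt

end

lemma tendsto_integral_lyapunovDeriv_atTop {A p b : ℝ} (hA : 0 < A) (hp : 1 ≤ p) (hp2 : p < 2)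
    (hb : 0 ≤ b) :
    Tendsto (fun t => ∫ y in (0:ℝ)..b, lyapunovDeriv A p t y) atTop
      (𝓝 (b ^ (2 - p) / (A * (2 - p)))) := by
  have hlimit : ∫ y in (0:ℝ)..b, y ^ (1 - p) / A = b ^ (2 - p) / (A * (2 - p)) := by
    rw [intervalIntegral.integral_div, integral_rpow (Or.inl (by linarith)),
      show 1 - p + 1 = 2 - p by ring, zero_rpow (by linarith), sub_zero, div_div, mul_comm]
  rw [← hlimit]
  refine intervalIntegral.tendsto_integral_filter_of_dominated_convergence
    (fun y => (p + 2 ^ (p - 1)) / A * y ^ (1 - p))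
    (.of_forall fun _ => (continuous_lyapunovDeriv (by linarith)).aestronglyMeasurable) ?_
    ((intervalIntegral.intervalIntegrable_rpow' (by linarith)).const_mul _) ?_
  · filter_upwards [eventually_gt_atTop 0] with t ht
    refine ae_of_all _ fun y hy => ?_
    rw [uIoc_of_le hb] at hy
    rw [norm_of_nonneg (lyapunovDeriv_nonneg ht.le hy.1.le)]
    exact lyapunovDeriv_le_rpow hA hp ht hy.1
  · refine ae_of_all _ fun y hy => ?_
    rw [uIoc_of_le hb] at hy
    exact tendsto_lyapunovDeriv_atTop hA hp hy.1

theorem stmt6_general (A γ : ℝ) (hA : 0 < A) (hγ : γ ∈ Set.Ioo (0:ℝ) 1) (x : ℝ) :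
    Tendsto (fun ε : ℝ =>
      ∫ y in (0:ℝ)..|x|, Real.exp (-2*A*y^(γ+1)/((γ+1)*ε^2)) *
        ∫ z in (0:ℝ)..y, (2/ε^2) * Real.exp (2*A*z^(γ+1)/((γ+1)*ε^2)))
      (nhdsWithin 0 (Set.Ioi 0)) (nhds (|x| ^ (1-γ) / (A*(1-γ)))) := by
  obtain ⟨hγ0, hγ1⟩ := hγ
  have htwo : Tendsto (fun ε : ℝ => 2 / ε ^ 2) (𝓝[>] 0) atTop :=
    ((tendsto_pow_atTop two_ne_zero).comp tendsto_inv_nhdsGT_zero |>.const_mul_atTop two_pos).congr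
      fun ε => by simp [div_eq_mul_inv]
  have hlim := (tendsto_integral_lyapunovDeriv_atTop (p := γ + 1) hA (by linarith) (by linarith)
    (abs_nonneg x)).comp htwo
  simp only [Function.comp_def, lyapunovDeriv_two_div_sq, show 2 - (γ + 1) = 1 - γ by ring] at hlim
  exact hlim

/-- Small-`ε` limit of the Lyapunov function:
`v_ε(x) → |x|^{1-γ}/(A(1-γ))` as `ε → 0⁺`, for every fixed `x ≠ 0`. -/
theorem stmt6 (A γ : ℝ) (hA : 0 < A) (hγ : γ ∈ Set.Ioo (0:ℝ) 1) (x : ℝ) (hx : x ≠ 0) :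
    Tendsto (fun ε : ℝ =>
      ∫ y in (0:ℝ)..|x|, Real.exp (-2*A*y^(γ+1)/((γ+1)*ε^2)) *
        ∫ z in (0:ℝ)..y, (2/ε^2) * Real.exp (2*A*z^(γ+1)/((γ+1)*ε^2)))
      (nhdsWithin 0 (Set.Ioi 0)) (nhds (|x| ^ (1-γ) / (A*(1-γ)))) :=
  stmt6_general A γ hA hγ x
end

section
/- For A > 0, γ ∈ (0,1) and ε > 0, define v_ε : ℝ → ℝ by v_ε(x) = ∫₀^{|x|} exp(−2A y^{γ+1}/((γ+1)ε²)) (∫₀^y (2/ε²) exp(2A z^{γ+1}/((γ+1)ε²)) dz) dy. Then v_ε(0) = 0, v_ε is twice continuously differentiable on (0,∞), v_ε′(x) ≥ 0 for all x > 0, and A x^γ v_ε′(x) + (ε²/2) v_ε″(x) = 1 for all x > 0. Consequently, for every a ≥ A and every x > 0, a x^γ v_ε′(x) + (ε²/2) v_ε″(x) ≥ 1. -/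
/-!
On `(0, ∞)` the function `v_ε` is a primitive of
`g(y) = exp (-Φ y) ∫₀^y (2/ε²) exp (Φ z) dz` with `Φ y = 2A y^{γ+1} / ((γ+1) ε²)`,
which is the integrating-factor solution of the linear equation `g' + Φ' g = 2/ε²`.
Since `Φ' x = (2A/ε²) x^γ`, this equation is exactly `A x^γ v' + (ε²/2) v'' = 1`; moreover
`g ≥ 0`, so increasing the drift from `A` to `a ≥ A` can only increase the left-hand side.
-/

open MeasureTheory Real Set Filter Topology

/-- The solution of `g' + Φ' g = c`, `g 0 = 0`, obtained with the integrating factor `exp Φ`. -/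
noncomputable def integratingFactorSol (Φ : ℝ → ℝ) (c y : ℝ) : ℝ :=
  exp (-Φ y) * ∫ z in (0:ℝ)..y, c * exp (Φ z)

section IntegratingFactor

variable {Φ φ : ℝ → ℝ} {c : ℝ}

theorem continuous_integratingFactorSol (hΦ : Continuous Φ) :
    Continuous (integratingFactorSol Φ c) :=
  (hΦ.neg.rexp).mul <| intervalIntegral.continuous_primitive
    (fun _ _ => (continuous_const.mul hΦ.rexp).intervalIntegrable _ _) 0

theorem hasDerivAt_integratingFactorSol (hΦ : Continuous Φ) {φx x : ℝ}
    (hΦx : HasDerivAt Φ φx x) :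
    HasDerivAt (integratingFactorSol Φ c) (c - φx * integratingFactorSol Φ c x) x := by
  have hI : HasDerivAt (fun y => ∫ z in (0:ℝ)..y, c * exp (Φ z)) (c * exp (Φ x)) x :=
    ((by fun_prop : Continuous fun z => c * exp (Φ z)).integral_hasStrictDerivAt 0 x).hasDerivAt
  refine (hΦx.neg.exp.mul hI).congr_deriv ?_
  have hcancel : exp (-Φ x) * exp (Φ x) = 1 := by rw [← exp_add, neg_add_cancel, exp_zero]
  rw [integratingFactorSol]
  linear_combination c * hcancel

theorem integratingFactorSol_nonneg (hc : 0 ≤ c) {x : ℝ} (hx : 0 ≤ x) :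
    0 ≤ integratingFactorSol Φ c x :=
  mul_nonneg (exp_pos _).le <|
    intervalIntegral.integral_nonneg hx fun _ _ => mul_nonneg hc (exp_pos _).le

theorem contDiffOn_integratingFactorSol {s : Set ℝ} (hs : IsOpen s) (hΦ : Continuous Φ)
    (hΦ' : ∀ x ∈ s, HasDerivAt Φ (φ x) x) (hφ : ContinuousOn φ s) :
    ContDiffOn ℝ 1 (integratingFactorSol Φ c) s := by
  have hg' x (hx : x ∈ s) := hasDerivAt_integratingFactorSol (c := c) hΦ (hΦ' x hx)
  rw [show (1 : WithTop ℕ∞) = 0 + 1 from rfl, contDiffOn_succ_iff_deriv_of_isOpen hs]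
  refine ⟨fun x hx => (hg' x hx).differentiableAt.differentiableWithinAt, by simp, ?_⟩
  rw [contDiffOn_zero]
  refine ContinuousOn.congr ?_ fun x hx => (hg' x hx).deriv
  exact continuousOn_const.sub (hφ.mul (continuous_integratingFactorSol hΦ).continuousOn)

end IntegratingFactor

section PrimitiveAbs

variable {g : ℝ → ℝ}

theorem integral_abs_eventuallyEq {x : ℝ} (hx : 0 < x) :
    (fun x => ∫ y in (0:ℝ)..|x|, g y) =ᶠ[𝓝 x] fun x => ∫ y in (0:ℝ)..x, g y :=
  eventually_of_mem (Ioi_mem_nhds hx) fun y (hy : 0 < y) => by simp only [abs_of_pos hy]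

theorem eventuallyEq_deriv_integral_abs (hg : Continuous g) {x : ℝ} (hx : 0 < x) :
    deriv (fun x => ∫ y in (0:ℝ)..|x|, g y) =ᶠ[𝓝 x] g :=
  (integral_abs_eventuallyEq hx).deriv.trans (Eventually.of_forall (hg.deriv_integral g 0))

theorem contDiffOn_integral_abs (hg : Continuous g) {n : ℕ∞}
    (hgn : ContDiffOn ℝ n g (Ioi 0)) :
    ContDiffOn ℝ (n + 1) (fun x => ∫ y in (0:ℝ)..|x|, g y) (Ioi 0) := by
  have hdiff : DifferentiableOn ℝ (fun x => ∫ y in (0:ℝ)..|x|, g y) (Ioi 0) := fun x hx =>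
    ((hg.integral_hasStrictDerivAt 0 x).hasDerivAt.differentiableAt.congr_of_eventuallyEq
      (integral_abs_eventuallyEq hx)).differentiableWithinAt
  rw [contDiffOn_succ_iff_deriv_of_isOpen isOpen_Ioi]
  exact ⟨hdiff, fun h => (WithTop.coe_ne_top h).elim,
    hgn.congr fun x hx => (eventuallyEq_deriv_integral_abs hg hx).eq_of_nhds⟩

end PrimitiveAbs

theorem hasDerivAt_mul_rpow_succ_div {b d p x : ℝ} (hp : p + 1 ≠ 0) (hx : 0 < x) :
    HasDerivAt (fun y => b * y ^ (p + 1) / ((p + 1) * d)) (b / d * x ^ p) x := by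
  refine (((hasDerivAt_rpow_const (Or.inl hx.ne')).const_mul b).div_const _).congr_deriv ?_
  rw [add_sub_cancel_right]
  field_simp

theorem stmt7_general (A γ ε : ℝ) (hγ : γ ∈ Set.Ioo (0:ℝ) 1) (hε : 0 < ε)
    (v : ℝ → ℝ)
    (hv : ∀ x : ℝ, v x = ∫ y in (0:ℝ)..|x|, Real.exp (-2*A*y^(γ+1)/((γ+1)*ε^2)) *
        ∫ z in (0:ℝ)..y, (2/ε^2) * Real.exp (2*A*z^(γ+1)/((γ+1)*ε^2))) :
    v 0 = 0 ∧ ContDiffOn ℝ 2 v (Set.Ioi 0) ∧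
      (∀ x > (0:ℝ), 0 ≤ deriv v x) ∧
      (∀ x > (0:ℝ), A * x^γ * deriv v x + ε^2/2 * deriv (deriv v) x = 1) ∧
      (∀ a ≥ A, ∀ x > (0:ℝ), 1 ≤ a * x^γ * deriv v x + ε^2/2 * deriv (deriv v) x) := by
  obtain ⟨hγ0, -⟩ := hγ
  set Φ : ℝ → ℝ := fun y => 2*A*y^(γ+1)/((γ+1)*ε^2)
  set g := integratingFactorSol Φ (2/ε^2)
  have hvg : v = fun x => ∫ y in (0:ℝ)..|x|, g y :=
    funext fun x => by simp only [hv, g, Φ, integratingFactorSol, neg_mul, neg_div]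
  have hΦ : Continuous Φ := by
    have := continuous_rpow_const (q := γ + 1) (by linarith)
    fun_prop
  have hΦ' : ∀ x ∈ Ioi (0:ℝ), HasDerivAt Φ (2*A/ε^2 * x^γ) x := fun x hx =>
    hasDerivAt_mul_rpow_succ_div (by linarith) hx
  have hg : Continuous g := continuous_integratingFactorSol hΦ
  have hdv : ∀ x > (0:ℝ), deriv v =ᶠ[𝓝 x] g := fun x hx =>
    hvg ▸ eventuallyEq_deriv_integral_abs hg hx
  have hdv2 : ∀ x > (0:ℝ), deriv (deriv v) x = 2/ε^2 - 2*A/ε^2 * x^γ * g x := fun x hx =>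
    (hdv x hx).deriv_eq.trans (hasDerivAt_integratingFactorSol hΦ (hΦ' x hx)).deriv
  have hnonneg : ∀ x > (0:ℝ), 0 ≤ deriv v x := fun x hx =>
    (hdv x hx).eq_of_nhds ▸ integratingFactorSol_nonneg (by positivity) hx.le
  have hLv : ∀ x > (0:ℝ), A * x^γ * deriv v x + ε^2/2 * deriv (deriv v) x = 1 := by
    intro x hx
    rw [(hdv x hx).eq_of_nhds, hdv2 x hx]
    field_simp
    ring
  refine ⟨by simp [hvg], ?_, hnonneg, hLv, fun a ha x hx => ?_⟩
  · have hφ : ContinuousOn (fun x : ℝ => 2*A/ε^2 * x^γ) (Ioi 0) :=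
      continuousOn_const.mul (continuousOn_id.rpow_const fun x hx => Or.inl (ne_of_gt hx))
    exact hvg ▸ contDiffOn_integral_abs (n := 1) hg
      (contDiffOn_integratingFactorSol isOpen_Ioi hΦ hΦ' hφ)
  · have hdrift : A * x^γ * deriv v x ≤ a * x^γ * deriv v x := by
      gcongr
      exact hnonneg x hx
    linarith [hLv x hx]

/-- Lyapunov property of `v_ε`: `v_ε(0) = 0`, `v_ε ∈ C²((0,∞))`, `v_ε' ≥ 0` on `(0,∞)`,
`A x^γ v_ε'(x) + (ε²/2) v_ε''(x) = 1` on `(0,∞)`, and consequently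
`a x^γ v_ε'(x) + (ε²/2) v_ε''(x) ≥ 1` for every `a ≥ A` and `x > 0`. -/
theorem stmt7 (A γ ε : ℝ) (hA : 0 < A) (hγ : γ ∈ Set.Ioo (0:ℝ) 1) (hε : 0 < ε)
    (v : ℝ → ℝ)
    (hv : ∀ x : ℝ, v x = ∫ y in (0:ℝ)..|x|, Real.exp (-2*A*y^(γ+1)/((γ+1)*ε^2)) *
        ∫ z in (0:ℝ)..y, (2/ε^2) * Real.exp (2*A*z^(γ+1)/((γ+1)*ε^2))) :
    v 0 = 0 ∧ ContDiffOn ℝ 2 v (Set.Ioi 0) ∧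
      (∀ x > (0:ℝ), 0 ≤ deriv v x) ∧
      (∀ x > (0:ℝ), A * x^γ * deriv v x + ε^2/2 * deriv (deriv v) x = 1) ∧
      (∀ a ≥ A, ∀ x > (0:ℝ), 1 ≤ a * x^γ * deriv v x + ε^2/2 * deriv (deriv v) x) :=
  stmt7_general A γ ε hγ hε v hv
end

section
/- Let γ ∈ (0,1), δ > 0, and let a₊, a₋, b₊, b₋ be positive reals. Define N_ε = ∫₀^δ exp(−2 a₋ z^{γ+1} / ((γ+1) ε² b₋)) dz and D_ε = ∫₀^δ exp(−2 a₊ z^{γ+1} / ((γ+1) ε² b₊)) dz. Then lim_{ε→0⁺} N_ε / (N_ε + D_ε) = (a₊/b₊)^{1/(γ+1)} / ((a₋/b₋)^{1/(γ+1)} + (a₊/b₊)^{1/(γ+1)}). -/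
/-!
Substituting `u = t^{1/p} z` gives `∫₀^δ exp(-t z^p) dz = t^{-1/p} ∫₀^{t^{1/p} δ} exp(-u^p) du`, and
the last integral tends to `∫₀^∞ exp(-u^p) du = Γ(1/p + 1)` as `t → ∞`. With `p = γ + 1` and
`t = (a/b) · 2/(p ε²)`, the rescaled integrals `(2/(p ε²))^{1/p} N_ε` and `(2/(p ε²))^{1/p} D_ε`
therefore converge to `(a₋/b₋)^{-1/p} Γ(1/p + 1)` and `(a₊/b₊)^{-1/p} Γ(1/p + 1)`, and the common
factor cancels in the ratio.
-/

open MeasureTheory Filter Real Set Topology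

theorem Filter.Tendsto.div_add_of_mul {α 𝕜 : Type*} [NormedField 𝕜] {l : Filter α}
    {f h g : α → 𝕜} {x y : 𝕜} (hf : Tendsto (fun a => g a * f a) l (𝓝 x))
    (hh : Tendsto (fun a => g a * h a) l (𝓝 y)) (hg : ∀ᶠ a in l, g a ≠ 0) (hxy : x + y ≠ 0) :
    Tendsto (fun a => f a / (f a + h a)) l (𝓝 (x / (x + y))) :=
  (hf.div (hf.add hh) hxy).congr' <| hg.mono fun a ha => by
    simp only [Pi.div_apply, ← mul_add]
    exact mul_div_mul_left _ _ ha

theorem intervalIntegral_exp_neg_mul_rpow {p t δ : ℝ} (hp : 0 < p) (ht : 0 < t) (hδ : 0 ≤ δ) :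
    ∫ z in (0:ℝ)..δ, exp (-t * z ^ p) =
      (t ^ (1 / p))⁻¹ * ∫ u in (0:ℝ)..t ^ (1 / p) * δ, exp (-u ^ p) := by
  have hk : 0 < t ^ (1 / p) := rpow_pos_of_pos ht _
  have hsubst : ∀ z ∈ uIcc 0 δ, exp (-t * z ^ p) = exp (-(t ^ (1 / p) * z) ^ p) := by
    intro z hz
    rw [uIcc_of_le hδ] at hz
    rw [mul_rpow hk.le hz.1, ← rpow_mul ht.le, one_div_mul_cancel hp.ne', rpow_one, neg_mul]
  rw [intervalIntegral.integral_congr hsubst,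
    intervalIntegral.integral_comp_mul_left (fun u => exp (-u ^ p)) hk.ne', mul_zero, smul_eq_mul]

theorem tendsto_rpow_mul_intervalIntegral_exp_neg_mul_rpow {p δ : ℝ} (hp : 0 < p) (hδ : 0 < δ) :
    Tendsto (fun t => t ^ (1 / p) * ∫ z in (0:ℝ)..δ, exp (-t * z ^ p)) atTop
      (𝓝 (Gamma (1 / p + 1))) := by
  have hbound : Tendsto (fun t : ℝ => t ^ (1 / p) * δ) atTop atTop :=
    (tendsto_rpow_atTop (by positivity)).atTop_mul_const hδ
  have hlim := intervalIntegral_tendsto_integral_Ioi 0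
    (by simpa using integrableOn_rpow_mul_exp_neg_rpow (s := 0) neg_one_lt_zero hp) hbound
  rw [integral_exp_neg_rpow hp] at hlim
  refine hlim.congr' ?_
  filter_upwards [eventually_gt_atTop 0] with t ht
  rw [intervalIntegral_exp_neg_mul_rpow hp ht hδ.le,
    mul_inv_cancel_left₀ (rpow_pos_of_pos ht _).ne']

theorem tendsto_rpow_mul_intervalIntegral_exp_neg_const_mul_rpow {p δ c : ℝ} (hp : 0 < p)
    (hδ : 0 < δ) (hc : 0 < c) :
    Tendsto (fun t => t ^ (1 / p) * ∫ z in (0:ℝ)..δ, exp (-(c * t) * z ^ p)) atTop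
      (𝓝 ((c ^ (1 / p))⁻¹ * Gamma (1 / p + 1))) := by
  refine ((tendsto_rpow_mul_intervalIntegral_exp_neg_mul_rpow hp hδ).comp
    (tendsto_id.const_mul_atTop hc)).const_mul (c ^ (1 / p))⁻¹ |>.congr' ?_
  filter_upwards [eventually_ge_atTop 0] with t ht
  simp only [Function.comp_apply, id, mul_rpow hc.le ht]
  rw [mul_assoc, inv_mul_cancel_left₀ (rpow_pos_of_pos hc _).ne']

theorem tendsto_rpow_mul_intervalIntegral_exp_neg_div_sq {p δ a b : ℝ} (hp : 0 < p)
    (hδ : 0 < δ) (ha : 0 < a) (hb : 0 < b) :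
    Tendsto (fun ε : ℝ => (2 / p * ε⁻¹ ^ 2) ^ (1 / p) *
        ∫ z in (0:ℝ)..δ, exp (-2 * a * z ^ p / (p * ε ^ 2 * b))) (𝓝[>] 0)
      (𝓝 (((a / b) ^ (1 / p))⁻¹ * Gamma (1 / p + 1))) := by
  have hrate : Tendsto (fun ε : ℝ => 2 / p * ε⁻¹ ^ 2) (𝓝[>] 0) atTop :=
    ((tendsto_pow_atTop two_ne_zero).comp tendsto_inv_nhdsGT_zero).const_mul_atTop (by positivity)
  refine ((tendsto_rpow_mul_intervalIntegral_exp_neg_const_mul_rpow hp hδ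
    (div_pos ha hb)).comp hrate).congr fun ε => ?_
  simp only [Function.comp_apply]
  congr 2; funext z; congr 1
  ring

/-- Limit identifying the selection probability `p₊`: with
`N_ε = ∫₀^δ exp(-2a₋ z^{γ+1}/((γ+1)ε²b₋)) dz` and
`D_ε = ∫₀^δ exp(-2a₊ z^{γ+1}/((γ+1)ε²b₊)) dz`, one has
`N_ε/(N_ε + D_ε) → (a₊/b₊)^{1/(γ+1)} / ((a₋/b₋)^{1/(γ+1)} + (a₊/b₊)^{1/(γ+1)})`
as `ε → 0⁺`. -/
theorem stmt9 (γ δ : ℝ) (hγ : γ ∈ Set.Ioo (0:ℝ) 1) (hδ : 0 < δ)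
    (ap am bp bm : ℝ) (hap : 0 < ap) (ham : 0 < am) (hbp : 0 < bp) (hbm : 0 < bm) :
    Tendsto (fun ε : ℝ =>
      (∫ z in (0:ℝ)..δ, Real.exp (-2*am*z^(γ+1)/((γ+1)*ε^2*bm))) /
      ((∫ z in (0:ℝ)..δ, Real.exp (-2*am*z^(γ+1)/((γ+1)*ε^2*bm))) +
       (∫ z in (0:ℝ)..δ, Real.exp (-2*ap*z^(γ+1)/((γ+1)*ε^2*bp)))))
      (nhdsWithin 0 (Set.Ioi 0))
      (nhds ((ap/bp) ^ (1/(γ+1)) / ((am/bm) ^ (1/(γ+1)) + (ap/bp) ^ (1/(γ+1))))) := by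
  have hp : 0 < γ + 1 := by linarith [hγ.1]
  generalize γ + 1 = p at hp ⊢
  have hΓ : 0 < Gamma (1 / p + 1) := Gamma_pos_of_pos (by positivity)
  have hxm : 0 < (am / bm) ^ (1 / p) := rpow_pos_of_pos (div_pos ham hbm) _
  have hxp : 0 < (ap / bp) ^ (1 / p) := rpow_pos_of_pos (div_pos hap hbp) _
  have hscale : ∀ᶠ ε : ℝ in 𝓝[>] 0, (2 / p * ε⁻¹ ^ 2) ^ (1 / p) ≠ 0 := by
    filter_upwards [self_mem_nhdsWithin] with ε (hε : 0 < ε)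
    positivity
  convert (tendsto_rpow_mul_intervalIntegral_exp_neg_div_sq hp hδ ham hbm).div_add_of_mul
    (tendsto_rpow_mul_intervalIntegral_exp_neg_div_sq hp hδ hap hbp) hscale (by positivity) using 2
  field_simp
  ring
end

section
/- Let γ ∈ (0,1), ε > 0, and let a₊, a₋, b₊, b₋ be positive reals. Define s_ε : ℝ → ℝ by s_ε(y) = ∫₀^y exp(−2 a₊ z^{γ+1} / ((γ+1) ε² b₊)) dz for y ≥ 0 and s_ε(y) = −∫₀^{|y|} exp(−2 a₋ z^{γ+1} / ((γ+1) ε² b₋)) dz for y < 0. Then s_ε is continuously differentiable on ℝ, twice continuously differentiable on ℝ∖{0}, and for any functions φ, β : ℝ → ℝ satisfying 0 < φ(y) ≤ a₊ and β(y)² ≥ b₊ for all y > 0, and φ(y) ≥ a₋ and 0 < β(y)² ≤ b₋ for all y < 0, one has φ(y) y^γ s_ε′(y) + (ε²/2) β(y)² s_ε″(y) ≤ 0 for all y ≠ 0, where y^γ := |y|^γ for y > 0 and y^γ := −|y|^γ for y < 0. -/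
/-!
On each side of `0`, `s_ε` is a primitive of `g(z) = exp(-2a z^{γ+1}/((γ+1)ε²b))` (mirrored for
`y < 0`), and `g' = -(2a/(ε²b)) z^γ g`. So, with `x = |y|`, the generator applied to `s_ε` is
`± g(x) x^γ (φ(y) - a β(y)²/b)`, and the bounds on `φ` and `β²` make it nonpositive on both sides.
Both densities equal `1` at `0`, so `s_ε` is the primitive of a continuous function, hence `C¹`.
-/

open Set

section GluedPrimitive

variable {f g : ℝ → ℝ}

noncomputable def gluedDensity (f g : ℝ → ℝ) (y : ℝ) : ℝ :=
  if 0 ≤ y then f y else g (-y)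

noncomputable def gluedPrimitive (f g : ℝ → ℝ) (y : ℝ) : ℝ :=
  if 0 ≤ y then ∫ z in (0:ℝ)..y, f z else -∫ z in (0:ℝ)..|y|, g z

lemma gluedDensity_of_pos {y : ℝ} (hy : 0 < y) : gluedDensity f g y = f y :=
  if_pos hy.le

lemma gluedDensity_of_neg {y : ℝ} (hy : y < 0) : gluedDensity f g y = g (-y) :=
  if_neg hy.not_ge

lemma gluedPrimitive_eq_integral (h0 : f 0 = g 0) (y : ℝ) :
    gluedPrimitive f g y = ∫ z in (0:ℝ)..y, gluedDensity f g z := by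
  rcases le_or_gt 0 y with hy | hy
  · rw [gluedPrimitive, if_pos hy]
    refine intervalIntegral.integral_congr fun z hz => ?_
    rw [uIcc_of_le hy] at hz
    exact (if_pos hz.1).symm
  · have hflip := intervalIntegral.integral_comp_neg (a := y) (b := 0) g
    rw [neg_zero] at hflip
    rw [gluedPrimitive, if_neg hy.not_ge, abs_of_neg hy, intervalIntegral.integral_symm y 0,
      neg_inj, ← hflip]
    refine intervalIntegral.integral_congr fun z hz => ?_
    rw [uIcc_of_le hy.le] at hz
    rcases hz.2.eq_or_lt with rfl | hz0
    · simp [gluedDensity, h0]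
    · exact (gluedDensity_of_neg hz0).symm

lemma continuous_gluedDensity (hf : Continuous f) (hg : Continuous g) (h0 : f 0 = g 0) :
    Continuous (gluedDensity f g) :=
  hf.if_le (hg.comp continuous_neg) continuous_const continuous_id fun x hx => by
    simp [← hx, h0]

lemma hasDerivAt_gluedPrimitive (hf : Continuous f) (hg : Continuous g) (h0 : f 0 = g 0)
    (y : ℝ) :
    HasDerivAt (gluedPrimitive f g) (gluedDensity f g y) y := by
  rw [funext (gluedPrimitive_eq_integral h0)]
  exact ((continuous_gluedDensity hf hg h0).integral_hasStrictDerivAt 0 y).hasDerivAt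

lemma deriv_gluedPrimitive (hf : Continuous f) (hg : Continuous g) (h0 : f 0 = g 0) :
    deriv (gluedPrimitive f g) = gluedDensity f g :=
  funext fun y => (hasDerivAt_gluedPrimitive hf hg h0 y).deriv

lemma contDiff_one_gluedPrimitive (hf : Continuous f) (hg : Continuous g)
    (h0 : f 0 = g 0) : ContDiff ℝ 1 (gluedPrimitive f g) :=
  contDiff_one_iff_deriv.mpr ⟨fun y => (hasDerivAt_gluedPrimitive hf hg h0 y).differentiableAt,
    deriv_gluedPrimitive hf hg h0 ▸ continuous_gluedDensity hf hg h0⟩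

lemma gluedDensity_eventuallyEq_of_pos {y : ℝ} (hy : 0 < y) :
    gluedDensity f g =ᶠ[nhds y] f := by
  filter_upwards [Ioi_mem_nhds hy] with z hz using gluedDensity_of_pos hz

lemma gluedDensity_eventuallyEq_of_neg {y : ℝ} (hy : y < 0) :
    gluedDensity f g =ᶠ[nhds y] fun z => g (-z) := by
  filter_upwards [Iio_mem_nhds hy] with z hz using gluedDensity_of_neg hz

lemma deriv_gluedDensity_of_pos {y : ℝ} (hy : 0 < y) :
    deriv (gluedDensity f g) y = deriv f y :=
  (gluedDensity_eventuallyEq_of_pos hy).deriv_eq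

lemma deriv_gluedDensity_of_neg {y : ℝ} (hy : y < 0) :
    deriv (gluedDensity f g) y = -deriv g (-y) := by
  rw [(gluedDensity_eventuallyEq_of_neg hy).deriv_eq, deriv_comp_neg]

lemma contDiffOn_gluedDensity {n : WithTop ℕ∞} (hf : ContDiffOn ℝ n f (Ioi 0))
    (hg : ContDiffOn ℝ n g (Ioi 0)) : ContDiffOn ℝ n (gluedDensity f g) {y | y ≠ 0} := by
  intro y hy
  refine ContDiffAt.contDiffWithinAt ?_
  rcases lt_or_gt_of_ne hy with hy | hy
  · have hg' : ContDiffAt ℝ n g (-y) := hg.contDiffAt (Ioi_mem_nhds (neg_pos.mpr hy))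
    exact (hg'.comp y contDiffAt_id.neg).congr_of_eventuallyEq
      (gluedDensity_eventuallyEq_of_neg hy)
  · exact (hf.contDiffAt (Ioi_mem_nhds hy)).congr_of_eventuallyEq
      (gluedDensity_eventuallyEq_of_pos hy)

lemma contDiffOn_two_gluedPrimitive (hf : Continuous f) (hg : Continuous g) (h0 : f 0 = g 0)
    (hf' : ContDiffOn ℝ 1 f (Ioi 0)) (hg' : ContDiffOn ℝ 1 g (Ioi 0)) :
    ContDiffOn ℝ 2 (gluedPrimitive f g) {y | y ≠ 0} := by
  rw [show (2 : WithTop ℕ∞) = 1 + 1 from rfl, contDiffOn_succ_iff_deriv_of_isOpen isOpen_ne,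
    deriv_gluedPrimitive hf hg h0]
  exact ⟨(contDiff_one_gluedPrimitive hf hg h0).differentiable one_ne_zero |>.differentiableOn,
    by simp, contDiffOn_gluedDensity hf' hg'⟩

end GluedPrimitive

section ScaleDensity

variable {γ ε a b : ℝ}

noncomputable def scaleDensity (γ ε a b z : ℝ) : ℝ :=
  Real.exp (-2*a*z^(γ+1)/((γ+1)*ε^2*b))

lemma continuous_scaleDensity (hγ : 0 ≤ γ + 1) : Continuous (scaleDensity γ ε a b) :=
  Real.continuous_exp.comp (((continuous_const.mul (Real.continuous_rpow_const hγ))).div_const _)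

lemma scaleDensity_pos (z : ℝ) : 0 < scaleDensity γ ε a b z :=
  Real.exp_pos _

lemma scaleDensity_zero (hγ : γ + 1 ≠ 0) : scaleDensity γ ε a b 0 = 1 := by
  simp [scaleDensity, Real.zero_rpow hγ]

lemma contDiffOn_scaleDensity {n : WithTop ℕ∞} :
    ContDiffOn ℝ n (scaleDensity γ ε a b) (Ioi 0) := fun x hx =>
  (Real.contDiff_exp.contDiffAt.comp x ((contDiffAt_const.mul
    (Real.contDiffAt_rpow_const_of_ne (ne_of_gt hx))).div_const _)).contDiffWithinAt

lemma hasDerivAt_scaleDensity {x : ℝ} (hx : 0 < x) :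
    HasDerivAt (scaleDensity γ ε a b)
      (scaleDensity γ ε a b x * (-2*a*((γ+1)*x^γ)/((γ+1)*ε^2*b))) x := by
  have hpow := Real.hasDerivAt_rpow_const (p := γ + 1) (Or.inl hx.ne')
  rw [add_sub_cancel_right] at hpow
  exact ((hpow.const_mul (-2*a)).div_const _).exp

/-- The generator `φ x^γ d/dx + (ε²/2) B d²/dx²` applied to a primitive of `scaleDensity`. -/
lemma generator_scaleDensity_eq (hγ : γ + 1 ≠ 0) (hε : ε ≠ 0) (hb : b ≠ 0) {x : ℝ} (hx : 0 < x)
    (φ B : ℝ) :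
    φ * x^γ * scaleDensity γ ε a b x + ε^2/2 * B * deriv (scaleDensity γ ε a b) x =
      scaleDensity γ ε a b x * x^γ * (φ - a * B / b) := by
  rw [(hasDerivAt_scaleDensity hx).deriv]
  field_simp
  ring

lemma generator_scaleDensity_nonpos (hγ : γ + 1 ≠ 0) (hε : ε ≠ 0) (ha : 0 ≤ a) (hb : 0 < b)
    {x φ B : ℝ} (hx : 0 < x) (hφ : φ ≤ a) (hB : b ≤ B) :
    φ * x^γ * scaleDensity γ ε a b x + ε^2/2 * B * deriv (scaleDensity γ ε a b) x ≤ 0 := by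
  rw [generator_scaleDensity_eq hγ hε hb.ne' hx]
  have hdrift : a ≤ a * B / b := by rw [le_div_iff₀ hb]; exact mul_le_mul_of_nonneg_left hB ha
  exact mul_nonpos_of_nonneg_of_nonpos
    (mul_pos (scaleDensity_pos x) (Real.rpow_pos_of_pos hx γ)).le (by linarith)

lemma generator_scaleDensity_nonneg (hγ : γ + 1 ≠ 0) (hε : ε ≠ 0) (ha : 0 ≤ a) (hb : 0 < b)
    {x φ B : ℝ} (hx : 0 < x) (hφ : a ≤ φ) (hB : B ≤ b) :
    0 ≤ φ * x^γ * scaleDensity γ ε a b x + ε^2/2 * B * deriv (scaleDensity γ ε a b) x := by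
  rw [generator_scaleDensity_eq hγ hε hb.ne' hx]
  have hdrift : a * B / b ≤ a := by rw [div_le_iff₀ hb]; exact mul_le_mul_of_nonneg_left hB ha
  exact mul_nonneg (mul_pos (scaleDensity_pos x) (Real.rpow_pos_of_pos hx γ)).le (by linarith)

end ScaleDensity

/-- Supersolution property of the scale-type function `s_ε` for the operator
`φ(y) y^γ (d/dy) + (ε²/2) β(y)² (d²/dy²)`, with the convention
`y^γ = |y|^γ` for `y > 0` and `y^γ = -|y|^γ` for `y < 0`. -/
theorem stmt10 (γ ε : ℝ) (hγ : γ ∈ Set.Ioo (0:ℝ) 1) (hε : 0 < ε)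
    (ap am bp bm : ℝ) (hap : 0 < ap) (ham : 0 < am) (hbp : 0 < bp) (hbm : 0 < bm)
    (s : ℝ → ℝ)
    (hs : ∀ y : ℝ, s y =
      if 0 ≤ y then ∫ z in (0:ℝ)..y, Real.exp (-2*ap*z^(γ+1)/((γ+1)*ε^2*bp))
      else -∫ z in (0:ℝ)..|y|, Real.exp (-2*am*z^(γ+1)/((γ+1)*ε^2*bm))) :
    ContDiff ℝ 1 s ∧ ContDiffOn ℝ 2 s {y : ℝ | y ≠ 0} ∧
      ∀ φ β : ℝ → ℝ,
        (∀ y > (0:ℝ), 0 < φ y ∧ φ y ≤ ap ∧ bp ≤ (β y)^2) →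
        (∀ y < (0:ℝ), am ≤ φ y ∧ 0 < (β y)^2 ∧ (β y)^2 ≤ bm) →
        ∀ y : ℝ, y ≠ 0 →
          φ y * (if 0 < y then |y| ^ γ else -(|y| ^ γ)) * deriv s y +
            ε^2/2 * (β y)^2 * deriv (deriv s) y ≤ 0 := by
  have hγ1 : 0 < γ + 1 := by linarith [hγ.1]
  obtain rfl : s = gluedPrimitive (scaleDensity γ ε ap bp) (scaleDensity γ ε am bm) := funext hs
  have hcp := continuous_scaleDensity (ε := ε) (a := ap) (b := bp) hγ1.le
  have hcm := continuous_scaleDensity (ε := ε) (a := am) (b := bm) hγ1.le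
  have h0 : scaleDensity γ ε ap bp 0 = scaleDensity γ ε am bm 0 := by
    rw [scaleDensity_zero hγ1.ne', scaleDensity_zero hγ1.ne']
  refine ⟨contDiff_one_gluedPrimitive hcp hcm h0,
    contDiffOn_two_gluedPrimitive hcp hcm h0 contDiffOn_scaleDensity contDiffOn_scaleDensity, ?_⟩
  intro φ β hpos hneg y hy
  rw [deriv_gluedPrimitive hcp hcm h0]
  rcases lt_or_gt_of_ne hy with hy | hy
  · obtain ⟨hφ, -, hβ⟩ := hneg y hy
    rw [if_neg hy.not_gt, abs_of_neg hy, gluedDensity_of_neg hy, deriv_gluedDensity_of_neg hy]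
    have := generator_scaleDensity_nonneg hγ1.ne' hε.ne' ham.le hbm (neg_pos.mpr hy) hφ hβ
    linarith
  · obtain ⟨-, hφ, hβ⟩ := hpos y hy
    rw [if_pos hy, abs_of_pos hy, gluedDensity_of_pos hy, deriv_gluedDensity_of_pos hy]
    exact generator_scaleDensity_nonpos hγ1.ne' hε.ne' hap.le hbp hy hφ hβ
end

section
/- Let (E, ℰ), (F, ℱ), (G, 𝒢) be measurable spaces, let P be a Markov (probability) kernel from E to F and Q a Markov kernel from F to G, and define the composition (QP)(y, A) = ∫_F Q(z, A) P(y, dz). For probability measures λ₁, λ₂ define ‖λ₁ − λ₂‖_TV = sup_A (λ₁(A) − λ₂(A)), the supremum over measurable sets. Suppose there are K ∈ ℱ, ρ ∈ (0,1], δ ∈ [0,1] and points y₁, y₂ ∈ E such that ‖Q(z₁, ·) − Q(z₂, ·)‖_TV ≤ 1 − ρ for all z₁, z₂ ∈ K, and P(y_i, K) ≥ δ for i = 1, 2. Then ‖(QP)(y₁, ·) − (QP)(y₂, ·)‖_TV ≤ 1 − ρ δ². -/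
open MeasureTheory ProbabilityTheory

/-!
Fix a measurable `A` and put `f z = Q(z, A) ∈ [0, 1]`. Under the independent coupling
`P(y₁, ·) ⊗ P(y₂, ·)` the difference `f z₁ - f z₂` is at most `1` everywhere and at most `1 - ρ`
on `K ×ˢ K`, a set of mass at least `δ²`; integrating it gives
`(QP)(y₁, A) - (QP)(y₂, A) ≤ 1 - ρ δ²`.
-/

/-- Total variation distance `sup_A (λ₁(A) − λ₂(A))` between two (probability) measures,
the supremum being taken over measurable sets. -/
noncomputable def tvDist {Ω : Type*} [MeasurableSpace Ω] (l₁ l₂ : Measure Ω) : ℝ :=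
  ⨆ A : {s : Set Ω // MeasurableSet s}, ((l₁ A.1).toReal - (l₂ A.1).toReal)

lemma tvDist_le {Ω : Type*} [MeasurableSpace Ω] {l₁ l₂ : Measure Ω} {c : ℝ}
    (h : ∀ A, MeasurableSet A → (l₁ A).toReal - (l₂ A).toReal ≤ c) : tvDist l₁ l₂ ≤ c :=
  have : Nonempty {s : Set Ω // MeasurableSet s} := ⟨⟨∅, .empty⟩⟩
  ciSup_le fun A => h A.1 A.2

lemma le_tvDist {Ω : Type*} [MeasurableSpace Ω] (l₁ l₂ : Measure Ω) [IsFiniteMeasure l₁]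
    {A : Set Ω} (hA : MeasurableSet A) : (l₁ A).toReal - (l₂ A).toReal ≤ tvDist l₁ l₂ := by
  refine le_ciSup (f := fun A : {s : Set Ω // MeasurableSet s} =>
    (l₁ A.1).toReal - (l₂ A.1).toReal) ⟨l₁.real Set.univ, ?_⟩ ⟨A, hA⟩
  rintro _ ⟨⟨s, -⟩, rfl⟩
  exact (sub_le_self _ ENNReal.toReal_nonneg).trans (measureReal_mono (Set.subset_univ s))

lemma integral_sub_integral_le_of_oscillation {F : Type*} [MeasurableSpace F]
    {μ ν : Measure F} [IsProbabilityMeasure μ] [IsProbabilityMeasure ν]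
    {f : F → ℝ} (hfμ : Integrable f μ) (hfν : Integrable f ν) {K : Set F} (hK : MeasurableSet K)
    {ρ : ℝ} (hf : ∀ z₁ z₂, f z₁ - f z₂ ≤ 1) (hfK : ∀ z₁ ∈ K, ∀ z₂ ∈ K, f z₁ - f z₂ ≤ 1 - ρ) :
    ∫ z, f z ∂μ - ∫ z, f z ∂ν ≤ 1 - ρ * (μ.real K * ν.real K) := by
  have hcoupling : ∫ z, f z ∂μ - ∫ z, f z ∂ν = ∫ p, (f p.1 - f p.2) ∂μ.prod ν := by
    rw [integral_sub (hfμ.comp_fst ν) (hfν.comp_snd μ), integral_fun_fst, integral_fun_snd]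
    simp
  have hpointwise : ∀ p : F × F, f p.1 - f p.2 ≤ 1 - ρ * (K ×ˢ K).indicator 1 p := by
    rintro ⟨z₁, z₂⟩
    by_cases hz : (z₁, z₂) ∈ K ×ˢ K
    · simpa [hz] using hfK z₁ hz.1 z₂ hz.2
    · simpa [hz] using hf z₁ z₂
  have hKK : MeasurableSet (K ×ˢ K) := hK.prod hK
  have hind : Integrable ((K ×ˢ K).indicator (1 : F × F → ℝ)) (μ.prod ν) :=
    (integrable_const 1).indicator hKK
  rw [hcoupling, ← measureReal_prod_prod, ← integral_indicator_one hKK]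
  calc ∫ p, (f p.1 - f p.2) ∂μ.prod ν
      ≤ ∫ p, (1 - ρ * (K ×ˢ K).indicator 1 p) ∂μ.prod ν :=
        integral_mono ((hfμ.comp_fst ν).sub (hfν.comp_snd μ))
          ((integrable_const 1).sub (hind.const_mul ρ)) hpointwise
    _ = 1 - ρ * ∫ p, (K ×ˢ K).indicator 1 p ∂μ.prod ν := by
        rw [integral_sub (integrable_const 1) (hind.const_mul ρ), integral_const_mul]
        simp

namespace ProbabilityTheory.Kernel

lemma comp_apply_toReal {E F G : Type*} [MeasurableSpace E] [MeasurableSpace F]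
    [MeasurableSpace G] (P : Kernel E F) (Q : Kernel F G) [IsFiniteKernel Q] (y : E)
    {A : Set G} (hA : MeasurableSet A) :
    ((Q ∘ₖ P) y A).toReal = ∫ z, (Q z A).toReal ∂P y := by
  rw [comp_apply' _ _ _ hA, integral_toReal (Q.measurable_coe hA).aemeasurable
    (ae_of_all _ fun z => measure_lt_top (Q z) A)]

lemma integrable_toReal_apply {E F : Type*} [MeasurableSpace E] [MeasurableSpace F]
    (Q : Kernel E F) [IsMarkovKernel Q] (μ : Measure E) [IsFiniteMeasure μ]
    {A : Set F} (hA : MeasurableSet A) : Integrable (fun z => (Q z A).toReal) μ := by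
  refine Integrable.of_bound (Q.measurable_coe hA).ennreal_toReal.aestronglyMeasurable 1
    (ae_of_all _ fun z => ?_)
  rw [Real.norm_of_nonneg ENNReal.toReal_nonneg]
  exact measureReal_le_one

end ProbabilityTheory.Kernel

/-- Propagation of a local Dobrushin condition through an extra transition step:
if `‖Q(z₁,·) − Q(z₂,·)‖_TV ≤ 1 − ρ` for all `z₁, z₂ ∈ K` and `P(yᵢ, K) ≥ δ`,
then `‖(QP)(y₁,·) − (QP)(y₂,·)‖_TV ≤ 1 − ρδ²`, where `(QP)(y,A) = ∫ Q(z,A) P(y,dz)`. -/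
theorem stmt12 {E F G : Type*} [MeasurableSpace E] [MeasurableSpace F] [MeasurableSpace G]
    (P : Kernel E F) (Q : Kernel F G) [IsMarkovKernel P] [IsMarkovKernel Q]
    (K : Set F) (hK : MeasurableSet K) (ρ δ : ℝ)
    (hρ : ρ ∈ Set.Ioc (0:ℝ) 1) (hδ : δ ∈ Set.Icc (0:ℝ) 1) (y₁ y₂ : E)
    (hQ : ∀ z₁ ∈ K, ∀ z₂ ∈ K, tvDist (Q z₁) (Q z₂) ≤ 1 - ρ)
    (hP₁ : δ ≤ (P y₁ K).toReal) (hP₂ : δ ≤ (P y₂ K).toReal) :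
    tvDist ((Q ∘ₖ P) y₁) ((Q ∘ₖ P) y₂) ≤ 1 - ρ * δ^2 := by
  refine tvDist_le fun A hA => ?_
  have hosc : ∀ z₁ z₂, (Q z₁ A).toReal - (Q z₂ A).toReal ≤ 1 := fun z₁ z₂ =>
    (sub_le_self _ ENNReal.toReal_nonneg).trans measureReal_le_one
  have hoscK : ∀ z₁ ∈ K, ∀ z₂ ∈ K, (Q z₁ A).toReal - (Q z₂ A).toReal ≤ 1 - ρ :=
    fun z₁ hz₁ z₂ hz₂ => (le_tvDist _ _ hA).trans (hQ z₁ hz₁ z₂ hz₂)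
  have hδsq : δ ^ 2 ≤ (P y₁).real K * (P y₂).real K := by
    rw [sq]
    exact mul_le_mul hP₁ hP₂ hδ.1 ENNReal.toReal_nonneg
  rw [Kernel.comp_apply_toReal _ _ _ hA, Kernel.comp_apply_toReal _ _ _ hA]
  calc _ ≤ 1 - ρ * ((P y₁).real K * (P y₂).real K) :=
        integral_sub_integral_le_of_oscillation (Q.integrable_toReal_apply _ hA)
          (Q.integrable_toReal_apply _ hA) hK hosc hoscK
    _ ≤ 1 - ρ * δ ^ 2 := by gcongr; exact hρ.1.le
end

section
/- Let γ ∈ (0,1) and 0 < c₁ ≤ c₂ < ∞. Let X : [0,∞) → ℝ^d be continuous, let φ : ℝ^d × ℝ → ℝ be continuous with c₁ ≤ φ(x,y) ≤ c₂ for all (x,y), and let Y : [0,∞) → ℝ be a continuous function with Y(0) = 0, Y(t) > 0 for all t > 0, satisfying Y(t) = ∫₀ᵗ φ(X(s),Y(s)) Y(s)^γ ds for all t ≥ 0. Then (1−γ) c₁ t ≤ Y(t)^{1−γ} ≤ (1−γ) c₂ t for all t ≥ 0. -/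
/-!
Away from `t = 0` the solution is positive, so the equation is a genuine ODE there and the
substitution `Z = Y ^ (1 - γ)` removes the degeneracy: by the chain rule
`Z' = (1 - γ) φ(X, Y) ∈ [(1 - γ) c₁, (1 - γ) c₂]`. Since `Z` is continuous with `Z 0 = 0`,
the mean value theorem turns these derivative bounds into the two linear bounds on `Z t`.
-/

open MeasureTheory Set

theorem hasDerivAt_of_eq_integral_of_continuousOn {E : Type*} [NormedAddCommGroup E]
    [NormedSpace ℝ E] [CompleteSpace E] {f Y : ℝ → E} {a x : ℝ}
    (hf : ContinuousOn f (Ici a)) (heq : ∀ t ≥ a, Y t = ∫ s in a..t, f s) (hx : a < x) :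
    HasDerivAt Y (f x) x := by
  have hnhds : Ici a ∈ nhds x := Ici_mem_nhds hx
  have hint : IntervalIntegrable f volume a x :=
    (hf.mono (uIcc_of_le hx.le ▸ Icc_subset_Ici_self)).intervalIntegrable
  have hmeas : StronglyMeasurableAtFilter f (nhds x) volume :=
    (hf.mono Ioi_subset_Ici_self).stronglyMeasurableAtFilter isOpen_Ioi x hx
  refine (intervalIntegral.integral_hasDerivAt_right hint hmeas
    (hf.continuousAt hnhds)).congr_of_eventuallyEq ?_
  filter_upwards [hnhds] with t ht using heq t ht

theorem HasDerivAt.rpow_one_sub_of_eq_mul_rpow {Y : ℝ → ℝ} {c γ x : ℝ}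
    (hY : HasDerivAt Y (c * Y x ^ γ) x) (hYx : 0 < Y x) :
    HasDerivAt (fun t => Y t ^ (1 - γ)) ((1 - γ) * c) x := by
  convert hY.rpow_const (p := 1 - γ) (Or.inl hYx.ne') using 1
  have hcancel : Y x ^ γ * Y x ^ (1 - γ - 1) = 1 := by
    rw [← Real.rpow_add hYx, show γ + (1 - γ - 1) = 0 by ring, Real.rpow_zero]
  linear_combination (-(c * (1 - γ))) * hcancel

theorem mul_sub_le_sub_and_sub_le_mul_sub_of_hasDerivAt_mem_Icc {Z g : ℝ → ℝ} {a m M : ℝ}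
    (hZ : ContinuousOn Z (Ici a)) (hZ' : ∀ x > a, HasDerivAt Z (g x) x)
    (hg : ∀ x > a, g x ∈ Icc m M) :
    ∀ t ≥ a, m * (t - a) ≤ Z t - Z a ∧ Z t - Z a ≤ M * (t - a) := by
  have hdiff : DifferentiableOn ℝ Z (interior (Ici a)) := by
    rw [interior_Ici]
    exact fun x hx => (hZ' x hx).differentiableAt.differentiableWithinAt
  have hderiv : ∀ x ∈ interior (Ici a), deriv Z x ∈ Icc m M := by
    rw [interior_Ici]
    exact fun x hx => (hZ' x hx).deriv ▸ hg x hx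
  intro t ht
  exact ⟨(convex_Ici a).mul_sub_le_image_sub_of_le_deriv hZ hdiff (fun x hx => (hderiv x hx).1)
      a self_mem_Ici t ht ht,
    (convex_Ici a).image_sub_le_mul_sub_of_deriv_le hZ hdiff (fun x hx => (hderiv x hx).2)
      a self_mem_Ici t ht ht⟩

theorem stmt15_general (d : ℕ) (γ c₁ c₂ : ℝ) (hγ : γ ∈ Set.Ioo (0:ℝ) 1)
    (X : ℝ → EuclideanSpace ℝ (Fin d)) (hX : ContinuousOn X (Ici 0))
    (φ : EuclideanSpace ℝ (Fin d) × ℝ → ℝ) (hφ : Continuous φ)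
    (hφb : ∀ p, φ p ∈ Icc c₁ c₂)
    (Y : ℝ → ℝ) (hY : ContinuousOn Y (Ici 0)) (hY0 : Y 0 = 0)
    (hYpos : ∀ t > (0:ℝ), 0 < Y t)
    (heq : ∀ t ≥ (0:ℝ), Y t = ∫ s in (0:ℝ)..t, φ (X s, Y s) * (Y s) ^ γ) :
    ∀ t ≥ (0:ℝ), (1-γ) * c₁ * t ≤ (Y t) ^ (1-γ) ∧ (Y t) ^ (1-γ) ≤ (1-γ) * c₂ * t := by
  obtain ⟨hγ0, hγ1⟩ := hγ
  have h1γ : 0 < 1 - γ := sub_pos.2 hγ1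
  have hrhs : ContinuousOn (fun s => φ (X s, Y s) * Y s ^ γ) (Ici 0) :=
    (hφ.comp_continuousOn (hX.prodMk hY)).mul (hY.rpow_const fun _ _ => Or.inr hγ0.le)
  have hZ' : ∀ x > (0:ℝ), HasDerivAt (fun t => Y t ^ (1 - γ)) ((1 - γ) * φ (X x, Y x)) x :=
    fun x hx => (hasDerivAt_of_eq_integral_of_continuousOn hrhs heq hx
      ).rpow_one_sub_of_eq_mul_rpow (hYpos x hx)
  have hbounds : ∀ x > (0:ℝ), (1 - γ) * φ (X x, Y x) ∈ Icc ((1 - γ) * c₁) ((1 - γ) * c₂) :=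
    fun x _ => ⟨mul_le_mul_of_nonneg_left (hφb _).1 h1γ.le,
      mul_le_mul_of_nonneg_left (hφb _).2 h1γ.le⟩
  intro t ht
  have h := mul_sub_le_sub_and_sub_le_mul_sub_of_hasDerivAt_mem_Icc
    (hY.rpow_const fun _ _ => Or.inr h1γ.le) hZ' hbounds t ht
  simpa only [hY0, Real.zero_rpow h1γ.ne', sub_zero] using h

/-- Two-sided growth bound for the extremal solution of the degenerate ODE
`Y(t) = ∫₀ᵗ φ(X(s),Y(s)) Y(s)^γ ds` with `c₁ ≤ φ ≤ c₂`:
`(1-γ) c₁ t ≤ Y(t)^{1-γ} ≤ (1-γ) c₂ t` for all `t ≥ 0`. -/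
theorem stmt15 (d : ℕ) (γ c₁ c₂ : ℝ) (hγ : γ ∈ Set.Ioo (0:ℝ) 1)
    (hc₁ : 0 < c₁) (hc : c₁ ≤ c₂)
    (X : ℝ → EuclideanSpace ℝ (Fin d)) (hX : ContinuousOn X (Ici 0))
    (φ : EuclideanSpace ℝ (Fin d) × ℝ → ℝ) (hφ : Continuous φ)
    (hφb : ∀ p, φ p ∈ Icc c₁ c₂)
    (Y : ℝ → ℝ) (hY : ContinuousOn Y (Ici 0)) (hY0 : Y 0 = 0)
    (hYpos : ∀ t > (0:ℝ), 0 < Y t)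
    (heq : ∀ t ≥ (0:ℝ), Y t = ∫ s in (0:ℝ)..t, φ (X s, Y s) * (Y s) ^ γ) :
    ∀ t ≥ (0:ℝ), (1-γ) * c₁ * t ≤ (Y t) ^ (1-γ) ∧ (Y t) ^ (1-γ) ≤ (1-γ) * c₂ * t :=
  stmt15_general d γ c₁ c₂ hγ X hX φ hφ hφb Y hY hY0 hYpos heq
end
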